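/- arXiv:2510.14034 — 7 statements merged into one kernel-verified Lean document; each statement's English description precedes it below -/
import Mathlib

section
/- Let τ > 0 and B ≥ 0 be real numbers, and let (a_k), (b_k), (γ_k) be sequences of nonnegative real numbers such that τ·γ_k < 1 for every k; set σ_k = (1 − τ·γ_k)^{-1}. Fix an integer n ≥ 1 and suppose that for every integer m with 0 ≤ m ≤ n one has a_m + τ·Σ_{k=0}^{m} b_k ≤ τ·Σ_{k=0}^{m} γ_k·a_k + B. Then a_n + τ·Σ_{k=0}^{n} b_k ≤ exp(τ·Σ_{k=0}^{n} γ_k·σ_k)·B. -/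
/-! Bounding `a_k` by `E_k := a_k + τ ∑_{j ≤ k} b_j` turns the hypothesis into the implicit
inequality `E_m ≤ ∑_{k ≤ m} τ γ_k E_k + B`. Moving the last term to the left shows that the
right-hand side `S_m := ∑_{k < m} τ γ_k E_k + B` grows by at most the factor
`σ_m = (1 - τ γ_m)⁻¹` at each step, so `E_n ≤ S_{n+1} ≤ (∏_{k ≤ n} σ_k) B`; finally
`σ_k = 1 + τ γ_k σ_k ≤ exp (τ γ_k σ_k)`. -/

open Finset

lemma inv_one_sub_le_exp {c : ℝ} (hc : c < 1) : (1 - c)⁻¹ ≤ Real.exp (c * (1 - c)⁻¹) := by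
  have hpos : 0 < 1 - c := sub_pos.2 hc
  calc (1 - c)⁻¹ = c * (1 - c)⁻¹ + 1 := by field_simp; ring
    _ ≤ Real.exp (c * (1 - c)⁻¹) := Real.add_one_le_exp _

lemma prod_inv_one_sub_le_exp_sum {ι : Type*} (s : Finset ι) {c : ι → ℝ}
    (hc : ∀ k ∈ s, c k < 1) :
    ∏ k ∈ s, (1 - c k)⁻¹ ≤ Real.exp (∑ k ∈ s, c k * (1 - c k)⁻¹) := by
  rw [Real.exp_sum]
  exact prod_le_prod (fun k hk => (inv_pos.2 (sub_pos.2 (hc k hk))).le)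
    fun k hk => inv_one_sub_le_exp (hc k hk)

lemma add_mul_le_inv_one_sub_mul {c x y : ℝ} (hc₀ : 0 ≤ c) (hc₁ : c < 1)
    (h : x ≤ c * x + y) : y + c * x ≤ (1 - c)⁻¹ * y := by
  have hpos : 0 < 1 - c := sub_pos.2 hc₁
  have hx : x ≤ (1 - c)⁻¹ * y := by
    rw [le_inv_mul_iff₀ hpos]
    linarith
  calc y + c * x ≤ y + c * ((1 - c)⁻¹ * y) := by gcongr
    _ = (1 - c)⁻¹ * y := by field_simp; ring

theorem le_prod_inv_one_sub_mul_of_le_sum_mul_add {u c : ℕ → ℝ} {B : ℝ}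
    (hc₀ : ∀ k, 0 ≤ c k) (hc₁ : ∀ k, c k < 1) {n : ℕ}
    (h : ∀ m ≤ n, u m ≤ ∑ k ∈ range (m + 1), c k * u k + B) :
    u n ≤ (∏ k ∈ range (n + 1), (1 - c k)⁻¹) * B := by
  set S : ℕ → ℝ := fun m => ∑ k ∈ range m, c k * u k + B with hS
  have hS_succ : ∀ m, S (m + 1) = S m + c m * u m := fun m => by
    simp only [hS, sum_range_succ]; ring
  have hu : ∀ m ≤ n, u m ≤ c m * u m + S m := fun m hm => by
    linarith [h m hm, hS_succ m]
  have hS_le : ∀ m ≤ n + 1, S m ≤ (∏ k ∈ range m, (1 - c k)⁻¹) * B := by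
    intro m hm
    induction m with
    | zero => simp [hS]
    | succ m ih =>
      have hσ : 0 ≤ (1 - c m)⁻¹ := (inv_pos.2 (sub_pos.2 (hc₁ m))).le
      calc S (m + 1) = S m + c m * u m := hS_succ m
        _ ≤ (1 - c m)⁻¹ * S m :=
          add_mul_le_inv_one_sub_mul (hc₀ m) (hc₁ m) (hu m (by omega))
        _ ≤ (1 - c m)⁻¹ * ((∏ k ∈ range m, (1 - c k)⁻¹) * B) := by
          gcongr
          exact ih (by omega)
        _ = (∏ k ∈ range (m + 1), (1 - c k)⁻¹) * B := by
          rw [prod_range_succ]; ring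
  calc u n ≤ S (n + 1) := h n le_rfl
    _ ≤ _ := hS_le (n + 1) le_rfl

theorem implicit_discrete_gronwall_general
    (τ B : ℝ) (hτ : 0 < τ) (hB : 0 ≤ B)
    (a b γ : ℕ → ℝ)
    (hb : ∀ k, 0 ≤ b k) (hγ : ∀ k, 0 ≤ γ k)
    (hτγ : ∀ k, τ * γ k < 1)
    (n : ℕ)
    (h : ∀ m ≤ n, a m + τ * ∑ k ∈ Finset.range (m + 1), b k ≤
        τ * (∑ k ∈ Finset.range (m + 1), γ k * a k) + B) :
    a n + τ * ∑ k ∈ Finset.range (n + 1), b k ≤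
      Real.exp (τ * ∑ k ∈ Finset.range (n + 1), γ k * (1 - τ * γ k)⁻¹) * B := by
  set E : ℕ → ℝ := fun m => a m + τ * ∑ k ∈ range (m + 1), b k
  have ha_le : ∀ k, a k ≤ E k := fun k =>
    le_add_of_nonneg_right (mul_nonneg hτ.le (sum_nonneg fun j _ => hb j))
  have hE : ∀ m ≤ n, E m ≤ ∑ k ∈ range (m + 1), τ * γ k * E k + B := fun m hm => by
    calc E m ≤ τ * (∑ k ∈ range (m + 1), γ k * a k) + B := h m hm
      _ ≤ τ * (∑ k ∈ range (m + 1), γ k * E k) + B := by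
        gcongr with k
        · exact hγ k
        · exact ha_le k
      _ = ∑ k ∈ range (m + 1), τ * γ k * E k + B := by
        simp only [mul_sum, mul_assoc]
  have hexp : τ * ∑ k ∈ range (n + 1), γ k * (1 - τ * γ k)⁻¹ =
      ∑ k ∈ range (n + 1), τ * γ k * (1 - τ * γ k)⁻¹ := by
    simp only [mul_sum, mul_assoc]
  calc E n ≤ (∏ k ∈ range (n + 1), (1 - τ * γ k)⁻¹) * B :=
        le_prod_inv_one_sub_mul_of_le_sum_mul_add (fun k => mul_nonneg hτ.le (hγ k)) hτγ hE
    _ ≤ _ := by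
      rw [hexp]
      gcongr
      exact prod_inv_one_sub_le_exp_sum _ fun k _ => hτγ k

/-- Implicit discrete Gronwall inequality (Lemma 2.1). -/
theorem implicit_discrete_gronwall
    (τ B : ℝ) (hτ : 0 < τ) (hB : 0 ≤ B)
    (a b γ : ℕ → ℝ)
    (ha : ∀ k, 0 ≤ a k) (hb : ∀ k, 0 ≤ b k) (hγ : ∀ k, 0 ≤ γ k)
    (hτγ : ∀ k, τ * γ k < 1)
    (n : ℕ) (hn : 1 ≤ n)
    (h : ∀ m ≤ n, a m + τ * ∑ k ∈ Finset.range (m + 1), b k ≤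
        τ * (∑ k ∈ Finset.range (m + 1), γ k * a k) + B) :
    a n + τ * ∑ k ∈ Finset.range (n + 1), b k ≤
      Real.exp (τ * ∑ k ∈ Finset.range (n + 1), γ k * (1 - τ * γ k)⁻¹) * B :=
  implicit_discrete_gronwall_general τ B hτ hB a b γ hb hγ hτγ n h
end

section
/- Let E be a real Banach space, let t ∈ ℝ and τ > 0, and let f : ℝ → E be three times continuously differentiable on the interval [t − τ, t + τ]. Then ‖f'(t) − (f(t+τ) − f(t−τ))/(2τ)‖² ≤ (τ³/40)·∫_{t−τ}^{t+τ} ‖f'''(s)‖² ds. -/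
open MeasureTheory intervalIntegral Set

/-!
Expanding `f(t ± τ)` by Taylor's formula with integral remainder around `t`, the terms in
`f''(t)` cancel and `f(t + τ) - f(t - τ) - 2τ f'(t)` is a sum of two remainders
`∫ ((x - s)² / 2) • f'''(s) ds` over `[t, t + τ]` and `[t - τ, t]`. By Cauchy–Schwarz each has
squared norm at most `(∫ (x - s)⁴ / 4) ∫ ‖f'''‖² = (τ⁵ / 20) ∫ ‖f'''‖²`, and
`(u + v)² ≤ 2 (u² + v²)` combines them into `(τ⁵ / 10) ∫_{t-τ}^{t+τ} ‖f'''‖²`; dividing by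
`(2τ)²` gives the constant `τ³ / 40`.
-/

theorem intervalIntegral.sq_integral_mul_le {a b : ℝ} (hab : a ≤ b) {g h : ℝ → ℝ}
    (hg : IntervalIntegrable (fun s => g s ^ 2) volume a b)
    (hh : IntervalIntegrable (fun s => h s ^ 2) volume a b)
    (hgh : IntervalIntegrable (fun s => g s * h s) volume a b) :
    (∫ s in a..b, g s * h s) ^ 2 ≤ (∫ s in a..b, g s ^ 2) * ∫ s in a..b, h s ^ 2 := by
  have quadratic_nonneg : ∀ x : ℝ, 0 ≤ (∫ s in a..b, g s ^ 2) * (x * x)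
      + (2 * ∫ s in a..b, g s * h s) * x + ∫ s in a..b, h s ^ 2 := by
    intro x
    have expand : ∫ s in a..b, (x * g s + h s) ^ 2 = (∫ s in a..b, g s ^ 2) * (x * x)
        + (2 * ∫ s in a..b, g s * h s) * x + ∫ s in a..b, h s ^ 2 := by
      have pointwise : ∀ s,
          (x * g s + h s) ^ 2 = (x * x) * g s ^ 2 + (2 * x) * (g s * h s) + h s ^ 2 :=
        fun s => by ring
      simp only [pointwise]
      rw [integral_add ((hg.const_mul _).add (hgh.const_mul _)) hh,
        integral_add (hg.const_mul _) (hgh.const_mul _), integral_const_mul, integral_const_mul]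
      ring
    rw [← expand]
    exact integral_nonneg hab fun s _ => sq_nonneg _
  have := discrim_le_zero quadratic_nonneg
  rw [discrim] at this
  nlinarith

theorem intervalIntegral.sq_norm_integral_smul_le {E : Type*} [NormedAddCommGroup E]
    [NormedSpace ℝ E] {a b : ℝ} (hab : a ≤ b) {g : ℝ → ℝ} {F : ℝ → E}
    (hg : ContinuousOn g (Icc a b)) (hF : ContinuousOn F (Icc a b)) :
    ‖∫ s in a..b, g s • F s‖ ^ 2 ≤ (∫ s in a..b, g s ^ 2) * ∫ s in a..b, ‖F s‖ ^ 2 := by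
  have integrable {u : ℝ → ℝ} (hu : ContinuousOn u (Icc a b)) :=
    hu.intervalIntegrable_of_Icc (μ := volume) hab
  calc ‖∫ s in a..b, g s • F s‖ ^ 2 ≤ (∫ s in a..b, |g s| * ‖F s‖) ^ 2 := by
        gcongr
        simpa only [norm_smul, Real.norm_eq_abs] using
          norm_integral_le_integral_norm (f := fun s => g s • F s) hab
    _ ≤ (∫ s in a..b, |g s| ^ 2) * ∫ s in a..b, ‖F s‖ ^ 2 :=
        sq_integral_mul_le hab (integrable (hg.abs.pow 2)) (integrable (hF.norm.pow 2))
          (integrable (hg.abs.mul hF.norm))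
    _ = (∫ s in a..b, g s ^ 2) * ∫ s in a..b, ‖F s‖ ^ 2 := by simp only [sq_abs]

theorem intervalIntegral.integral_eq_sub_of_hasDerivWithinAt_Icc {E : Type*}
    [NormedAddCommGroup E] [NormedSpace ℝ E] [CompleteSpace E] {a b x y : ℝ} {F F' : ℝ → E}
    (hF : ∀ s ∈ Icc a b, HasDerivWithinAt F (F' s) (Icc a b) s)
    (hx : x ∈ Icc a b) (hy : y ∈ Icc a b) (hint : IntervalIntegrable F' volume x y) :
    ∫ s in x..y, F' s = F y - F x := by
  have hsub : uIcc x y ⊆ Icc a b := uIcc_subset_Icc hx hy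
  have hcont : ContinuousOn F (Icc a b) := fun s hs => (hF s hs).continuousWithinAt
  refine integral_eq_sub_of_hasDeriv_right (hcont.mono hsub) (fun s hs => ?_) hint
  have hs' : s ∈ Ioo a b :=
    ⟨(le_min hx.1 hy.1).trans_lt hs.1, hs.2.trans_le (max_le hx.2 hy.2)⟩
  exact ((hF s (Ioo_subset_Icc_self hs')).hasDerivAt (Icc_mem_nhds hs'.1 hs'.2)).hasDerivWithinAt

section Taylor

variable {E : Type*} [NormedAddCommGroup E] [NormedSpace ℝ E] {a b : ℝ} {f f₁ f₂ f₃ : ℝ → E}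

theorem hasDerivWithinAt_taylor_two (x : ℝ) {s : ℝ} {I : Set ℝ}
    (hf : HasDerivWithinAt f (f₁ s) I s) (hf₁ : HasDerivWithinAt f₁ (f₂ s) I s)
    (hf₂ : HasDerivWithinAt f₂ (f₃ s) I s) :
    HasDerivWithinAt (fun u => f u + (x - u) • f₁ u + ((x - u) ^ 2 / 2) • f₂ u)
      (((x - s) ^ 2 / 2) • f₃ s) I s := by
  have hlin : HasDerivWithinAt (fun u : ℝ => x - u) (-1) I s := by
    simpa using (hasDerivWithinAt_id s I).const_sub x
  have hquad : HasDerivWithinAt (fun u : ℝ => (x - u) ^ 2 / 2) (-(x - s)) I s :=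
    ((hlin.pow 2).div_const 2).congr_deriv (by ring)
  exact ((hf.add (hlin.smul hf₁)).add (hquad.smul hf₂)).congr_deriv (by module)

theorem taylor_two_integral_remainder [CompleteSpace E]
    (hf : ∀ s ∈ Icc a b, HasDerivWithinAt f (f₁ s) (Icc a b) s)
    (hf₁ : ∀ s ∈ Icc a b, HasDerivWithinAt f₁ (f₂ s) (Icc a b) s)
    (hf₂ : ∀ s ∈ Icc a b, HasDerivWithinAt f₂ (f₃ s) (Icc a b) s)
    (hf₃ : ContinuousOn f₃ (Icc a b)) {t x : ℝ} (ht : t ∈ Icc a b) (hx : x ∈ Icc a b) :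
    f x = f t + (x - t) • f₁ t + ((x - t) ^ 2 / 2) • f₂ t
      + ∫ s in t..x, ((x - s) ^ 2 / 2) • f₃ s := by
  have hint : IntervalIntegrable (fun s => ((x - s) ^ 2 / 2) • f₃ s) volume t x :=
    (ContinuousOn.smul (by fun_prop) (hf₃.mono (uIcc_subset_Icc ht hx))).intervalIntegrable
  rw [integral_eq_sub_of_hasDerivWithinAt_Icc
    (fun s hs => hasDerivWithinAt_taylor_two x (hf s hs) (hf₁ s hs) (hf₂ s hs)) ht hx hint]
  module

theorem sub_centered_difference_quotient_eq [CompleteSpace E] {t τ : ℝ} (hτ : 0 < τ)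
    (hf : ∀ s ∈ Icc (t - τ) (t + τ), HasDerivWithinAt f (f₁ s) (Icc (t - τ) (t + τ)) s)
    (hf₁ : ∀ s ∈ Icc (t - τ) (t + τ), HasDerivWithinAt f₁ (f₂ s) (Icc (t - τ) (t + τ)) s)
    (hf₂ : ∀ s ∈ Icc (t - τ) (t + τ), HasDerivWithinAt f₂ (f₃ s) (Icc (t - τ) (t + τ)) s)
    (hf₃ : ContinuousOn f₃ (Icc (t - τ) (t + τ))) :
    f₁ t - (2 * τ)⁻¹ • (f (t + τ) - f (t - τ)) =
      -(2 * τ)⁻¹ • ((∫ s in t..(t + τ), ((t + τ - s) ^ 2 / 2) • f₃ s)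
        + ∫ s in (t - τ)..t, ((t - τ - s) ^ 2 / 2) • f₃ s) := by
  have ht : t ∈ Icc (t - τ) (t + τ) := ⟨by linarith, by linarith⟩
  rw [taylor_two_integral_remainder hf hf₁ hf₂ hf₃ ht ⟨by linarith, le_rfl⟩,
    taylor_two_integral_remainder hf hf₁ hf₂ hf₃ ht ⟨le_rfl, by linarith⟩, integral_symm t]
  match_scalars <;> field_simp <;> ring

end Taylor

theorem integral_taylor_kernel_sq (a b x : ℝ) :
    ∫ s in a..b, ((x - s) ^ 2 / 2) ^ 2 = ((x - a) ^ 5 - (x - b) ^ 5) / 20 := by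
  have hpoly : ∀ s : ℝ, ((x - s) ^ 2 / 2) ^ 2 = (x - s) ^ 4 / 4 := fun s => by ring
  simp only [hpoly, intervalIntegral.integral_div]
  rw [integral_comp_sub_left (fun u => u ^ 4), integral_pow]
  ring

theorem sq_norm_taylor_two_remainder_le {E : Type*} [NormedAddCommGroup E] [NormedSpace ℝ E]
    {a b : ℝ} (hab : a ≤ b) (x : ℝ) {F : ℝ → E} (hF : ContinuousOn F (Icc a b)) :
    ‖∫ s in a..b, ((x - s) ^ 2 / 2) • F s‖ ^ 2 ≤
      ((x - a) ^ 5 - (x - b) ^ 5) / 20 * ∫ s in a..b, ‖F s‖ ^ 2 := by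
  rw [← integral_taylor_kernel_sq]
  exact sq_norm_integral_smul_le hab (by fun_prop) hF

/-- Single-step consistency estimate for the centered (leap-frog) difference quotient:
`‖f'(t) - (f(t+τ) - f(t-τ))/(2τ)‖² ≤ (τ³/40) ∫_{t-τ}^{t+τ} ‖f'''(s)‖² ds`. -/
theorem centered_difference_consistency
    {E : Type*} [NormedAddCommGroup E] [NormedSpace ℝ E] [CompleteSpace E]
    (t τ : ℝ) (hτ : 0 < τ) (f f1 f2 f3 : ℝ → E)
    (hf : ∀ s ∈ Set.Icc (t - τ) (t + τ),
      HasDerivWithinAt f (f1 s) (Set.Icc (t - τ) (t + τ)) s)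
    (hf1 : ∀ s ∈ Set.Icc (t - τ) (t + τ),
      HasDerivWithinAt f1 (f2 s) (Set.Icc (t - τ) (t + τ)) s)
    (hf2 : ∀ s ∈ Set.Icc (t - τ) (t + τ),
      HasDerivWithinAt f2 (f3 s) (Set.Icc (t - τ) (t + τ)) s)
    (hf3 : ContinuousOn f3 (Set.Icc (t - τ) (t + τ))) :
    ‖f1 t - (2 * τ)⁻¹ • (f (t + τ) - f (t - τ))‖ ^ 2 ≤
      τ ^ 3 / 40 * ∫ s in (t - τ)..(t + τ), ‖f3 s‖ ^ 2 := by
  have hl : t - τ ≤ t := by linarith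
  have hr : t ≤ t + τ := by linarith
  have hf3r : ContinuousOn f3 (Icc t (t + τ)) := hf3.mono (Icc_subset_Icc hl le_rfl)
  have hf3l : ContinuousOn f3 (Icc (t - τ) t) := hf3.mono (Icc_subset_Icc le_rfl hr)
  have split : ∫ s in (t - τ)..(t + τ), ‖f3 s‖ ^ 2 =
      (∫ s in (t - τ)..t, ‖f3 s‖ ^ 2) + ∫ s in t..(t + τ), ‖f3 s‖ ^ 2 :=
    (integral_add_adjacent_intervals ((hf3l.norm.pow 2).intervalIntegrable_of_Icc hl)
      ((hf3r.norm.pow 2).intervalIntegrable_of_Icc hr)).symm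
  rw [sub_centered_difference_quotient_eq hτ hf hf1 hf2 hf3, split]
  set Rr := ∫ s in t..(t + τ), ((t + τ - s) ^ 2 / 2) • f3 s
  set Rl := ∫ s in (t - τ)..t, ((t - τ - s) ^ 2 / 2) • f3 s
  have hRr : ‖Rr‖ ^ 2 ≤ τ ^ 5 / 20 * ∫ s in t..(t + τ), ‖f3 s‖ ^ 2 := by
    convert sq_norm_taylor_two_remainder_le hr (t + τ) hf3r using 2; ring
  have hRl : ‖Rl‖ ^ 2 ≤ τ ^ 5 / 20 * ∫ s in (t - τ)..t, ‖f3 s‖ ^ 2 := by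
    convert sq_norm_taylor_two_remainder_le hl (t - τ) hf3l using 2; ring
  calc ‖-(2 * τ)⁻¹ • (Rr + Rl)‖ ^ 2 = ‖Rr + Rl‖ ^ 2 / (2 * τ) ^ 2 := by
        rw [norm_smul, norm_neg, norm_inv, Real.norm_of_nonneg (by positivity)]
        field_simp
    _ ≤ 2 * (‖Rr‖ ^ 2 + ‖Rl‖ ^ 2) / (2 * τ) ^ 2 := by
        gcongr
        exact (pow_le_pow_left₀ (norm_nonneg _) (norm_add_le _ _) 2).trans add_sq_le
    _ ≤ _ := by
        rw [div_le_iff₀ (by positivity)]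
        linear_combination 2 * hRr + 2 * hRl
end

section
/- Let E be a real Banach space, let T > 0, let N ≥ 2 be an integer, set τ = T/N and t_n = n·τ for 0 ≤ n ≤ N, and let f : ℝ → E be three times continuously differentiable on [0, T]. Then τ·Σ_{n=1}^{N−1} ‖f'(t_n) − (f(t_{n+1}) − f(t_{n−1}))/(2τ)‖² ≤ (τ⁴/20)·∫_{0}^{T} ‖f'''(s)‖² ds. -/
/-!
Expanding `f` by Taylor's formula with integral remainder about `tₙ` in both directions, the
terms in `f` and `f''` cancel in the centered difference, so the error at `tₙ` is `(2τ)⁻¹`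
times two remainder integrals with kernel `(τ - |s - tₙ|)² / 2`. Cauchy–Schwarz together with
`∫₀^τ (x² / 2)² dx = τ⁵ / 20` bounds its square by `τ³ / 40` times `∫ ‖f'''‖²` over
`[tₙ₋₁, tₙ₊₁]`, and in the sum over `n` every cell `[tₖ, tₖ₊₁]` is covered at most twice.
-/

open MeasureTheory Set

theorem integral_mul_sq_le_integral_sq_mul_integral_sq {α : Type*} [MeasurableSpace α]
    {μ : Measure α} {u v : α → ℝ} (hu : Integrable (fun x ↦ u x ^ 2) μ)
    (hv : Integrable (fun x ↦ v x ^ 2) μ) (huv : Integrable (fun x ↦ u x * v x) μ) :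
    (∫ x, u x * v x ∂μ) ^ 2 ≤ (∫ x, u x ^ 2 ∂μ) * ∫ x, v x ^ 2 ∂μ := by
  have hquad : ∀ t : ℝ, 0 ≤ (∫ x, u x ^ 2 ∂μ) * (t * t) + (-2 * ∫ x, u x * v x ∂μ) * t
      + ∫ x, v x ^ 2 ∂μ := fun t ↦ by
    have hexpand : ∫ x, (t * u x - v x) ^ 2 ∂μ = (∫ x, u x ^ 2 ∂μ) * (t * t)
        + (-2 * ∫ x, u x * v x ∂μ) * t + ∫ x, v x ^ 2 ∂μ := by
      have hpt : (fun x ↦ (t * u x - v x) ^ 2)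
          = fun x ↦ (t * t) * u x ^ 2 + (-2 * t) * (u x * v x) + v x ^ 2 := by
        funext x; ring
      rw [hpt, integral_add (f := fun x ↦ (t * t) * u x ^ 2 + (-2 * t) * (u x * v x))
          ((hu.const_mul _).add (huv.const_mul _)) hv,
        integral_add (hu.const_mul _) (huv.const_mul _), integral_const_mul, integral_const_mul]
      ring
    exact hexpand ▸ integral_nonneg fun x ↦ sq_nonneg _
  have hdiscrim := discrim_le_zero hquad
  rw [discrim] at hdiscrim
  nlinarith

theorem norm_integral_smul_sq_le {E : Type*} [NormedAddCommGroup E] [NormedSpace ℝ E]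
    {a b : ℝ} (hab : a ≤ b) {w : ℝ → ℝ} {g : ℝ → E}
    (hw : ContinuousOn w (Icc a b)) (hg : ContinuousOn g (Icc a b)) :
    ‖∫ x in a..b, w x • g x‖ ^ 2 ≤ (∫ x in a..b, w x ^ 2) * ∫ x in a..b, ‖g x‖ ^ 2 := by
  have hint : ∀ {h : ℝ → ℝ}, ContinuousOn h (Icc a b) → Integrable h (volume.restrict (Ioc a b)) :=
    fun hh ↦ hh.integrableOn_Icc.mono_set Ioc_subset_Icc_self
  have hnorm : ‖∫ x in a..b, w x • g x‖ ≤ ∫ x in a..b, |w x| * ‖g x‖ := by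
    refine (intervalIntegral.norm_integral_le_integral_norm hab).trans_eq ?_
    simp only [norm_smul, Real.norm_eq_abs]
  calc ‖∫ x in a..b, w x • g x‖ ^ 2 ≤ (∫ x in a..b, |w x| * ‖g x‖) ^ 2 := by
        gcongr
    _ ≤ (∫ x in a..b, |w x| ^ 2) * ∫ x in a..b, ‖g x‖ ^ 2 := by
        simp only [intervalIntegral.integral_of_le hab]
        exact integral_mul_sq_le_integral_sq_mul_integral_sq (hint (hw.abs.pow 2))
          (hint (hg.norm.pow 2)) (hint (hw.abs.mul hg.norm))
    _ = (∫ x in a..b, w x ^ 2) * ∫ x in a..b, ‖g x‖ ^ 2 := by simp only [sq_abs]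

theorem integral_sq_half_sq_sub (a b c : ℝ) :
    ∫ x in a..b, ((c - x) ^ 2 / 2) ^ 2 = ((c - a) ^ 5 - (c - b) ^ 5) / 20 := by
  have hpt : (fun x : ℝ ↦ ((c - x) ^ 2 / 2) ^ 2) = fun x ↦ (c - x) ^ 4 / 4 := by
    funext x; ring
  rw [hpt, intervalIntegral.integral_div,
    intervalIntegral.integral_comp_sub_left (fun x ↦ x ^ 4), integral_pow]
  ring

theorem norm_integral_sq_half_sq_smul_sq_le {E : Type*} [NormedAddCommGroup E]
    [NormedSpace ℝ E] {a b : ℝ} (hab : a ≤ b) (c : ℝ) {g : ℝ → E}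
    (hg : ContinuousOn g (Icc a b)) :
    ‖∫ x in a..b, ((c - x) ^ 2 / 2) • g x‖ ^ 2 ≤
      ((c - a) ^ 5 - (c - b) ^ 5) / 20 * ∫ x in a..b, ‖g x‖ ^ 2 := by
  rw [← integral_sq_half_sq_sub]
  exact norm_integral_smul_sq_le hab (by fun_prop) hg

theorem sum_Icc_pred_add_le_two_mul_sum_range {B : ℕ → ℝ} (hB : ∀ k, 0 ≤ B k) (N : ℕ) :
    ∑ n ∈ Finset.Icc 1 (N - 1), (B (n - 1) + B n) ≤ 2 * ∑ k ∈ Finset.range N, B k := by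
  rw [Finset.sum_add_distrib, two_mul]
  refine add_le_add ?_ ?_
  · rw [← Finset.sum_image (g := (· - 1)) fun x hx y hy hxy ↦ by
      simp only [Finset.coe_Icc, mem_Icc] at hx hy hxy; omega]
    refine Finset.sum_le_sum_of_subset_of_nonneg (Finset.image_subset_iff.mpr fun x hx ↦ ?_)
      fun k _ _ ↦ hB k
    simp only [Finset.mem_Icc, Finset.mem_range] at hx ⊢; omega
  · refine Finset.sum_le_sum_of_subset_of_nonneg (fun x hx ↦ ?_) fun k _ _ ↦ hB k
    simp only [Finset.mem_Icc, Finset.mem_range] at hx ⊢; omega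

noncomputable def cellIntegral (g : ℝ → ℝ) (τ : ℝ) (k : ℕ) : ℝ :=
  ∫ x in (k : ℝ) * τ..((k : ℝ) + 1) * τ, g x

theorem cellIntegral_nonneg {g : ℝ → ℝ} (hg : ∀ x, 0 ≤ g x) {τ : ℝ} (hτ : 0 ≤ τ) (k : ℕ) :
    0 ≤ cellIntegral g τ k :=
  intervalIntegral.integral_nonneg (by gcongr; linarith) fun x _ ↦ hg x

theorem sum_cellIntegral {g : ℝ → ℝ} {τ : ℝ} (hτ : 0 ≤ τ) {N : ℕ}
    (hg : ContinuousOn g (Icc 0 (N * τ))) :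
    ∑ k ∈ Finset.range N, cellIntegral g τ k = ∫ x in (0 : ℝ)..N * τ, g x := by
  have hcells := intervalIntegral.sum_integral_adjacent_intervals
    (a := fun k : ℕ ↦ (k : ℝ) * τ) (f := g) (μ := volume) fun k hk ↦ by
      refine (hg.mono ?_).intervalIntegrable
      rw [uIcc_of_le (by gcongr; simp)]
      exact Icc_subset_Icc (by positivity) (by gcongr; exact_mod_cast hk)
  simp only [Nat.cast_zero, zero_mul, Nat.cast_succ] at hcells
  exact hcells

section CenteredDifference

variable {E : Type*} [NormedAddCommGroup E] [NormedSpace ℝ E] [CompleteSpace E] {s : Set ℝ}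

theorem integral_eq_sub_of_hasDerivWithinAt_of_uIcc_subset {g g' : ℝ → E} {a b : ℝ}
    (hg : ∀ x ∈ s, HasDerivWithinAt g (g' x) s x) (hg' : ContinuousOn g' s)
    (hab : uIcc a b ⊆ s) :
    ∫ x in a..b, g' x = g b - g a := by
  refine intervalIntegral.integral_eq_sub_of_hasDeriv_right
    (fun x hx ↦ (hg x (hab hx)).continuousWithinAt.mono hab) (fun x hx ↦ ?_)
    (hg'.mono hab).intervalIntegrable
  have hs : s ∈ nhds x := Filter.mem_of_superset (Icc_mem_nhds hx.1 hx.2) hab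
  exact ((hg x (mem_of_mem_nhds hs)).hasDerivAt hs).hasDerivWithinAt

variable {f f' f'' f''' : ℝ → E}

theorem taylor_two_integral_remainder_s4
    (hf : ∀ x ∈ s, HasDerivWithinAt f (f' x) s x)
    (hf' : ∀ x ∈ s, HasDerivWithinAt f' (f'' x) s x)
    (hf'' : ∀ x ∈ s, HasDerivWithinAt f'' (f''' x) s x)
    (hf''' : ContinuousOn f''' s) {a b : ℝ} (hab : uIcc a b ⊆ s) :
    f b = f a + (b - a) • f' a + ((b - a) ^ 2 / 2) • f'' a
      + ∫ x in a..b, ((b - x) ^ 2 / 2) • f''' x := by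
  have hderiv : ∀ x ∈ s, HasDerivWithinAt
      (fun y ↦ f y + (b - y) • f' y + ((b - y) ^ 2 / 2) • f'' y)
      (((b - x) ^ 2 / 2) • f''' x) s x := by
    intro x hx
    have hlin : HasDerivWithinAt (fun y : ℝ ↦ b - y) (-1) s x :=
      (hasDerivWithinAt_id x s).const_sub b
    have hquad : HasDerivWithinAt (fun y : ℝ ↦ (b - y) ^ 2 / 2) (-(b - x)) s x :=
      ((hlin.pow 2).div_const 2).congr_deriv (by ring)
    refine (((hf x hx).add (hlin.smul (hf' x hx))).add
      (hquad.smul (hf'' x hx))).congr_deriv ?_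
    module
  rw [integral_eq_sub_of_hasDerivWithinAt_of_uIcc_subset hderiv (by fun_prop) hab]
  simp only [sub_self, zero_smul, add_zero, ne_eq, OfNat.ofNat_ne_zero, not_false_eq_true,
    zero_pow, zero_div]
  abel

theorem norm_deriv_sub_centered_difference_sq_le
    (hf : ∀ x ∈ s, HasDerivWithinAt f (f' x) s x)
    (hf' : ∀ x ∈ s, HasDerivWithinAt f' (f'' x) s x)
    (hf'' : ∀ x ∈ s, HasDerivWithinAt f'' (f''' x) s x)
    (hf''' : ContinuousOn f''' s) {t τ : ℝ} (hτ : 0 < τ) (hs : Icc (t - τ) (t + τ) ⊆ s) :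
    ‖f' t - (2 * τ)⁻¹ • (f (t + τ) - f (t - τ))‖ ^ 2 ≤
      τ ^ 3 / 40 * ((∫ x in t - τ..t, ‖f''' x‖ ^ 2) + ∫ x in t..t + τ, ‖f''' x‖ ^ 2) := by
  set Rₗ := ∫ x in t - τ..t, ((t - τ - x) ^ 2 / 2) • f''' x
  set Rᵣ := ∫ x in t..t + τ, ((t + τ - x) ^ 2 / 2) • f''' x
  have hsubₗ : Icc (t - τ) t ⊆ s := (Icc_subset_Icc_right (by linarith)).trans hs
  have hsubᵣ : Icc t (t + τ) ⊆ s := (Icc_subset_Icc_left (by linarith)).trans hs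
  have htaylorₗ := taylor_two_integral_remainder_s4 hf hf' hf'' hf'''
    ((uIcc_of_ge (by linarith : t - τ ≤ t)).trans_subset hsubₗ)
  have htaylorᵣ := taylor_two_integral_remainder_s4 hf hf' hf'' hf'''
    ((uIcc_of_le (by linarith : t ≤ t + τ)).trans_subset hsubᵣ)
  rw [intervalIntegral.integral_symm] at htaylorₗ
  have herror : f' t - (2 * τ)⁻¹ • (f (t + τ) - f (t - τ)) = -(2 * τ)⁻¹ • (Rₗ + Rᵣ) := by
    rw [htaylorₗ, htaylorᵣ]
    match_scalars <;> field_simp <;> ring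
  have hRₗ : ‖Rₗ‖ ^ 2 ≤ τ ^ 5 / 20 * ∫ x in t - τ..t, ‖f''' x‖ ^ 2 :=
    (norm_integral_sq_half_sq_smul_sq_le (by linarith) _ (hf'''.mono hsubₗ)).trans_eq
      (by ring)
  have hRᵣ : ‖Rᵣ‖ ^ 2 ≤ τ ^ 5 / 20 * ∫ x in t..t + τ, ‖f''' x‖ ^ 2 :=
    (norm_integral_sq_half_sq_smul_sq_le (by linarith) _ (hf'''.mono hsubᵣ)).trans_eq
      (by ring)
  calc ‖f' t - (2 * τ)⁻¹ • (f (t + τ) - f (t - τ))‖ ^ 2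
      = (4 * τ ^ 2)⁻¹ * ‖Rₗ + Rᵣ‖ ^ 2 := by
        rw [herror, norm_smul, norm_neg, norm_inv, Real.norm_of_nonneg (by positivity)]
        ring
    _ ≤ (4 * τ ^ 2)⁻¹ * (2 * (‖Rₗ‖ ^ 2 + ‖Rᵣ‖ ^ 2)) := by
        gcongr
        exact (pow_le_pow_left₀ (norm_nonneg _) (norm_add_le _ _) 2).trans add_sq_le
    _ ≤ (4 * τ ^ 2)⁻¹ * (2 * (τ ^ 5 / 20 * (∫ x in t - τ..t, ‖f''' x‖ ^ 2)
          + τ ^ 5 / 20 * ∫ x in t..t + τ, ‖f''' x‖ ^ 2)) := by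
        gcongr
    _ = τ ^ 3 / 40 * ((∫ x in t - τ..t, ‖f''' x‖ ^ 2) + ∫ x in t..t + τ, ‖f''' x‖ ^ 2) := by
        field_simp
        ring

theorem norm_deriv_sub_centered_difference_grid_sq_le
    (hf : ∀ x ∈ s, HasDerivWithinAt f (f' x) s x)
    (hf' : ∀ x ∈ s, HasDerivWithinAt f' (f'' x) s x)
    (hf'' : ∀ x ∈ s, HasDerivWithinAt f'' (f''' x) s x)
    (hf''' : ContinuousOn f''' s) {τ : ℝ} (hτ : 0 < τ) {n : ℕ} (hn : 1 ≤ n)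
    (hs : Icc (((n : ℝ) - 1) * τ) (((n : ℝ) + 1) * τ) ⊆ s) :
    ‖f' ((n : ℝ) * τ) - (2 * τ)⁻¹ • (f (((n : ℝ) + 1) * τ) - f (((n : ℝ) - 1) * τ))‖ ^ 2 ≤
      τ ^ 3 / 40 * (cellIntegral (fun x ↦ ‖f''' x‖ ^ 2) τ (n - 1)
        + cellIntegral (fun x ↦ ‖f''' x‖ ^ 2) τ n) := by
  obtain ⟨k, rfl⟩ : ∃ k, n = k + 1 := ⟨n - 1, by omega⟩
  convert norm_deriv_sub_centered_difference_sq_le hf hf' hf'' hf''' hτ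
    (t := ((k + 1 : ℕ) : ℝ) * τ) (by convert hs using 2 <;> ring) using 3
  · push_cast; ring_nf
  all_goals simp only [cellIntegral, add_tsub_cancel_right]; push_cast; ring_nf

end CenteredDifference

/-- Summed consistency estimate for the centered (leap-frog) difference quotient
(Lemma 4.2, first two inequalities):
`τ ∑_{n=1}^{N-1} ‖f'(t_n) - (f(t_{n+1}) - f(t_{n-1}))/(2τ)‖² ≤ (τ⁴/20) ∫_0^T ‖f'''(s)‖² ds`,
where `τ = T/N` and `t_n = n τ`. -/
theorem centered_difference_summed_consistency
    {E : Type*} [NormedAddCommGroup E] [NormedSpace ℝ E] [CompleteSpace E]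
    (T : ℝ) (hT : 0 < T) (N : ℕ) (hN : 2 ≤ N) (τ : ℝ) (hτ : τ = T / N)
    (f f1 f2 f3 : ℝ → E)
    (hf : ∀ s ∈ Set.Icc (0 : ℝ) T, HasDerivWithinAt f (f1 s) (Set.Icc (0 : ℝ) T) s)
    (hf1 : ∀ s ∈ Set.Icc (0 : ℝ) T, HasDerivWithinAt f1 (f2 s) (Set.Icc (0 : ℝ) T) s)
    (hf2 : ∀ s ∈ Set.Icc (0 : ℝ) T, HasDerivWithinAt f2 (f3 s) (Set.Icc (0 : ℝ) T) s)
    (hf3 : ContinuousOn f3 (Set.Icc (0 : ℝ) T)) :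
    τ * ∑ n ∈ Finset.Icc 1 (N - 1),
        ‖f1 ((n : ℝ) * τ) -
          (2 * τ)⁻¹ • (f (((n : ℝ) + 1) * τ) - f (((n : ℝ) - 1) * τ))‖ ^ 2 ≤
      τ ^ 4 / 20 * ∫ s in (0 : ℝ)..T, ‖f3 s‖ ^ 2 := by
  have hτpos : 0 < τ := hτ ▸ div_pos hT (by exact_mod_cast (by omega : 0 < N))
  have hNτ : (N : ℝ) * τ = T := by rw [hτ]; field_simp
  set C := cellIntegral (fun x ↦ ‖f3 x‖ ^ 2) τ
  calc τ * ∑ n ∈ Finset.Icc 1 (N - 1),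
        ‖f1 ((n : ℝ) * τ) - (2 * τ)⁻¹ • (f (((n : ℝ) + 1) * τ) - f (((n : ℝ) - 1) * τ))‖ ^ 2
      ≤ τ * ∑ n ∈ Finset.Icc 1 (N - 1), τ ^ 3 / 40 * (C (n - 1) + C n) := by
        gcongr with n hn
        obtain ⟨hn₁, hnN⟩ := Finset.mem_Icc.mp hn
        have hn' : (n : ℝ) + 1 ≤ N := by exact_mod_cast (by omega : n + 1 ≤ N)
        refine norm_deriv_sub_centered_difference_grid_sq_le hf hf1 hf2 hf3 hτpos hn₁
          (Icc_subset_Icc ?_ (by rw [← hNτ]; gcongr))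
        exact mul_nonneg (by simpa using hn₁) hτpos.le
    _ = τ ^ 4 / 40 * ∑ n ∈ Finset.Icc 1 (N - 1), (C (n - 1) + C n) := by
        rw [← Finset.mul_sum]; ring
    _ ≤ τ ^ 4 / 40 * (2 * ∑ k ∈ Finset.range N, C k) := by
        gcongr
        exact sum_Icc_pred_add_le_two_mul_sum_range
          (cellIntegral_nonneg (fun x ↦ by positivity) hτpos.le) N
    _ = τ ^ 4 / 20 * ∫ s in (0 : ℝ)..T, ‖f3 s‖ ^ 2 := by
        rw [sum_cellIntegral hτpos.le (hNτ ▸ hf3.norm.pow 2), hNτ]; ring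
end

section
/- Let E be a real Banach space, let t ∈ ℝ and τ > 0, and let f : ℝ → E be twice continuously differentiable on the interval [t − τ, t + τ]. Then ‖f(t) − (f(t+τ) + f(t−τ))/2‖² ≤ (τ³/6)·∫_{t−τ}^{t+τ} ‖f''(s)‖² ds. -/
open MeasureTheory Set Interval

/-!
Expanding `f` to first order around `t` with integral remainder on `[t, t + τ]` and on
`[t - τ, t]`, the first-order terms cancel in `f (t + τ) + f (t - τ) - 2 f t`, which is left as
the difference of the two remainders `∫ (t ± τ - s) • f'' s`. By Cauchy–Schwarz the square of
each remainder is at most `τ³/3` times `∫ ‖f''‖²` over its half interval, and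
`‖(L - R)/2‖² ≤ (‖L‖² + ‖R‖²)/2` adds the two halves up.
-/

section

variable {E : Type*} [NormedAddCommGroup E] [NormedSpace ℝ E]

theorem norm_integral_smul_sq_le_s6 {α : Type*} [MeasurableSpace α] {μ : Measure α}
    {g : α → ℝ} {h : α → E} (hg : MemLp g 2 μ) (hh : MemLp h 2 μ) :
    ‖∫ a, g a • h a ∂μ‖ ^ 2 ≤ (∫ a, g a ^ 2 ∂μ) * ∫ a, ‖h a‖ ^ 2 ∂μ := by
  have holder := integral_mul_norm_le_Lp_mul_Lq (μ := μ) Real.HolderConjugate.two_two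
    (by simpa using hg) (by simpa using hh.norm)
  simp only [Real.rpow_two, Real.norm_eq_abs, abs_norm, sq_abs, ← Real.sqrt_eq_rpow] at holder
  have hnorm : ‖∫ a, g a • h a ∂μ‖ ≤ ∫ a, |g a| * ‖h a‖ ∂μ := by
    simpa only [norm_smul, Real.norm_eq_abs] using
      norm_integral_le_integral_norm (fun a => g a • h a)
  calc ‖∫ a, g a • h a ∂μ‖ ^ 2 ≤ (√(∫ a, g a ^ 2 ∂μ) * √(∫ a, ‖h a‖ ^ 2 ∂μ)) ^ 2 := by
        gcongr; exact hnorm.trans holder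
    _ = (∫ a, g a ^ 2 ∂μ) * ∫ a, ‖h a‖ ^ 2 ∂μ := by
        rw [mul_pow, Real.sq_sqrt (integral_nonneg fun _ => sq_nonneg _),
          Real.sq_sqrt (integral_nonneg fun _ => sq_nonneg _)]

theorem ContinuousOn.memLp_restrict_Ioc {F : Type*} [NormedAddCommGroup F] {f : ℝ → F} {a b : ℝ}
    (hf : ContinuousOn f (Icc a b)) (p : ENNReal) : MemLp f p (volume.restrict (Ioc a b)) := by
  obtain ⟨C, hC⟩ := isCompact_Icc.exists_bound_of_continuousOn hf
  exact MemLp.of_bound ((hf.aestronglyMeasurable measurableSet_Icc).mono_set Ioc_subset_Icc_self) C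
    ((ae_restrict_iff' measurableSet_Ioc).2 (.of_forall fun x hx => hC x (Ioc_subset_Icc_self hx)))

theorem integral_sub_sq (x a b : ℝ) :
    ∫ s in a..b, (x - s) ^ 2 = ((x - a) ^ 3 - (x - b) ^ 3) / 3 := by
  rw [intervalIntegral.integral_comp_sub_left (fun s => s ^ 2), integral_pow]
  norm_num

theorem norm_integral_sub_smul_sq_le {f : ℝ → E} {a b : ℝ} (hab : a ≤ b) (x : ℝ)
    (hf : ContinuousOn f (Icc a b)) :
    ‖∫ s in a..b, (x - s) • f s‖ ^ 2 ≤
      ((x - a) ^ 3 - (x - b) ^ 3) / 3 * ∫ s in a..b, ‖f s‖ ^ 2 := by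
  simp only [← integral_sub_sq, intervalIntegral.integral_of_le hab]
  exact norm_integral_smul_sq_le_s6
    ((continuous_const.sub continuous_id).continuousOn.memLp_restrict_Ioc 2)
    (hf.memLp_restrict_Ioc 2)

/-- Taylor's formula with integral remainder: `x = b` expands `f b` around `a`,
`x = a` expands `f a` around `b`. -/
theorem integral_sub_smul_eq_of_hasDerivWithinAt [CompleteSpace E] {f f₁ f₂ : ℝ → E} {a b : ℝ}
    (x : ℝ) (hf : ∀ s ∈ [[a, b]], HasDerivWithinAt f (f₁ s) [[a, b]] s)
    (hf₁ : ∀ s ∈ [[a, b]], HasDerivWithinAt f₁ (f₂ s) [[a, b]] s)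
    (hf₂ : IntervalIntegrable f₂ volume a b) :
    ∫ s in a..b, (x - s) • f₂ s = f b + (x - b) • f₁ b - (f a + (x - a) • f₁ a) := by
  have hg : ∀ s ∈ [[a, b]],
      HasDerivWithinAt (fun s => f s + (x - s) • f₁ s) ((x - s) • f₂ s) [[a, b]] s := by
    intro s hs
    convert (hf s hs).add (((hasDerivAt_id' s).hasDerivWithinAt.const_sub x).smul (hf₁ s hs))
      using 1
    · rfl
    · module
  refine intervalIntegral.integral_eq_sub_of_hasDeriv_right
    (fun s hs => (hg s hs).continuousWithinAt)
    (fun s hs => ((hg s (mem_Icc_of_Ioo hs)).hasDerivAt (Icc_mem_nhds hs.1 hs.2)).hasDerivWithinAt)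
    (hf₂.continuousOn_smul (by fun_prop))

theorem norm_taylor_remainder_sq_le [CompleteSpace E] {f f₁ f₂ : ℝ → E} {a b : ℝ} (hab : a ≤ b)
    (x : ℝ) (hf : ∀ s ∈ Icc a b, HasDerivWithinAt f (f₁ s) (Icc a b) s)
    (hf₁ : ∀ s ∈ Icc a b, HasDerivWithinAt f₁ (f₂ s) (Icc a b) s)
    (hf₂ : ContinuousOn f₂ (Icc a b)) :
    ‖f b + (x - b) • f₁ b - (f a + (x - a) • f₁ a)‖ ^ 2 ≤
      ((x - a) ^ 3 - (x - b) ^ 3) / 3 * ∫ s in a..b, ‖f₂ s‖ ^ 2 := by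
  rw [← uIcc_of_le hab] at hf hf₁ hf₂
  rw [← integral_sub_smul_eq_of_hasDerivWithinAt x hf hf₁ hf₂.intervalIntegrable]
  exact norm_integral_sub_smul_sq_le hab x (uIcc_of_le hab ▸ hf₂)

end

/-- Single-step consistency estimate for the two-level average of the
Crank–Nicolson Leap-Frog scheme:
`‖f(t) - (f(t+τ) + f(t-τ))/2‖² ≤ (τ³/6) ∫_{t-τ}^{t+τ} ‖f''(s)‖² ds`. -/
theorem two_level_average_consistency
    {E : Type*} [NormedAddCommGroup E] [NormedSpace ℝ E] [CompleteSpace E]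
    (t τ : ℝ) (hτ : 0 < τ) (f f1 f2 : ℝ → E)
    (hf : ∀ s ∈ Set.Icc (t - τ) (t + τ),
      HasDerivWithinAt f (f1 s) (Set.Icc (t - τ) (t + τ)) s)
    (hf1 : ∀ s ∈ Set.Icc (t - τ) (t + τ),
      HasDerivWithinAt f1 (f2 s) (Set.Icc (t - τ) (t + τ)) s)
    (hf2 : ContinuousOn f2 (Set.Icc (t - τ) (t + τ))) :
    ‖f t - (2 : ℝ)⁻¹ • (f (t + τ) + f (t - τ))‖ ^ 2 ≤
      τ ^ 3 / 6 * ∫ s in (t - τ)..(t + τ), ‖f2 s‖ ^ 2 := by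
  have hl : t - τ ≤ t := by linarith
  have hr : t ≤ t + τ := by linarith
  have hleft : Icc (t - τ) t ⊆ Icc (t - τ) (t + τ) := Icc_subset_Icc_right hr
  have hright : Icc t (t + τ) ⊆ Icc (t - τ) (t + τ) := Icc_subset_Icc_left hl
  have hL := norm_taylor_remainder_sq_le hl (t - τ) (fun s hs => (hf s (hleft hs)).mono hleft)
    (fun s hs => (hf1 s (hleft hs)).mono hleft) (hf2.mono hleft)
  have hR := norm_taylor_remainder_sq_le hr (t + τ) (fun s hs => (hf s (hright hs)).mono hright)
    (fun s hs => (hf1 s (hright hs)).mono hright) (hf2.mono hright)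
  set L := f t + (t - τ - t) • f1 t - (f (t - τ) + (t - τ - (t - τ)) • f1 (t - τ))
  set R := f (t + τ) + (t + τ - (t + τ)) • f1 (t + τ) - (f t + (t + τ - t) • f1 t)
  have hsplit : f t - (2 : ℝ)⁻¹ • (f (t + τ) + f (t - τ)) = (2 : ℝ)⁻¹ • (L - R) := by
    simp only [L, R]; module
  have hJ : ∫ s in (t - τ)..(t + τ), ‖f2 s‖ ^ 2 =
      (∫ s in (t - τ)..t, ‖f2 s‖ ^ 2) + ∫ s in t..(t + τ), ‖f2 s‖ ^ 2 :=
    (intervalIntegral.integral_add_adjacent_intervals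
      (((hf2.mono hleft).norm.pow 2).intervalIntegrable_of_Icc hl)
      (((hf2.mono hright).norm.pow 2).intervalIntegrable_of_Icc hr)).symm
  calc ‖f t - (2 : ℝ)⁻¹ • (f (t + τ) + f (t - τ))‖ ^ 2 ≤ (‖L‖ ^ 2 + ‖R‖ ^ 2) / 2 := by
        rw [hsplit, norm_smul, Real.norm_of_nonneg (by norm_num)]
        nlinarith [norm_sub_le L R, sq_nonneg (‖L‖ - ‖R‖), norm_nonneg (L - R)]
    _ ≤ τ ^ 3 / 6 * ∫ s in (t - τ)..(t + τ), ‖f2 s‖ ^ 2 := by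
        rw [hJ]
        ring_nf at hL hR ⊢
        linarith
end

section
/- Let E be a real Banach space, let T > 0, let N ≥ 2 be an integer, set τ = T/N and t_n = n·τ for 0 ≤ n ≤ N, and let f : ℝ → E be twice continuously differentiable on [0, T]. Then τ·Σ_{n=1}^{N−1} ‖f(t_n) − (f(t_{n+1}) + f(t_{n−1}))/2‖² ≤ (τ⁴/3)·∫_{0}^{T} ‖f''(s)‖² ds. -/
/-!
At a grid point `t`, the consistency error is `-(R₁ + R₂) / 2`, where `R₁` and `R₂` are the
first-order Taylor remainders of `f` from `t` to `t + τ` and to `t - τ`. Integration by parts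
gives `f b - f a - (b - a) f'(a) = ∫_a^b (b - s) f''(s) ds`, and Cauchy–Schwarz with
`∫_a^b (b - s)² ds = (b - a)³ / 3` bounds each `‖Rᵢ‖²` by `τ³ / 3` times the integral of
`‖f''‖²` over its half-window. So the squared error at `t_n` is at most
`τ³ / 6 · ∫_{t_{n-1}}^{t_{n+1}} ‖f''‖²`; the windows cover each cell `[t_k, t_{k+1}]` at most
twice, which gives the constant `τ⁴ / 3` after summation.
-/

open MeasureTheory Set intervalIntegral

theorem sq_intervalIntegral_mul_le {a b : ℝ} {u v : ℝ → ℝ}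
    (hu : ContinuousOn u (uIcc a b)) (hv : ContinuousOn v (uIcc a b)) :
    (∫ x in a..b, u x * v x) ^ 2 ≤ (∫ x in a..b, u x ^ 2) * ∫ x in a..b, v x ^ 2 := by
  wlog hab : a ≤ b generalizing a b
  · have h := this (uIcc_comm a b ▸ hu) (uIcc_comm a b ▸ hv) (le_of_not_ge hab)
    simpa only [integral_symm a b, neg_sq, neg_mul_neg] using h
  have key : ∀ c : ℝ, 0 ≤ (∫ x in a..b, u x ^ 2) * (c * c)
      + (-2 * ∫ x in a..b, u x * v x) * c + ∫ x in a..b, v x ^ 2 := by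
    intro c
    have hexp : ∀ x, (c * u x - v x) ^ 2 = c ^ 2 * u x ^ 2 - 2 * c * (u x * v x) + v x ^ 2 :=
      fun x => by ring
    calc 0 ≤ ∫ x in a..b, (c * u x - v x) ^ 2 := integral_nonneg hab fun x _ => sq_nonneg _
      _ = _ := by
        simp_rw [hexp]
        rw [intervalIntegral.integral_add, intervalIntegral.integral_sub,
          intervalIntegral.integral_const_mul, intervalIntegral.integral_const_mul]
        · ring
        all_goals exact ContinuousOn.intervalIntegrable (by fun_prop)
  have := discrim_le_zero key
  rw [discrim] at this
  nlinarith

theorem norm_intervalIntegral_smul_sq_le {E : Type*} [NormedAddCommGroup E] [NormedSpace ℝ E]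
    {a b : ℝ} {w : ℝ → ℝ} {g : ℝ → E}
    (hw : ContinuousOn w (uIcc a b)) (hg : ContinuousOn g (uIcc a b)) :
    ‖∫ x in a..b, w x • g x‖ ^ 2 ≤ (∫ x in a..b, w x ^ 2) * ∫ x in a..b, ‖g x‖ ^ 2 := by
  have hCS := sq_intervalIntegral_mul_le hw.abs hg.norm
  simp only [sq_abs] at hCS
  calc ‖∫ x in a..b, w x • g x‖ ^ 2 ≤ |∫ x in a..b, |w x| * ‖g x‖| ^ 2 := by
        gcongr
        simpa only [norm_smul, Real.norm_eq_abs] using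
          norm_integral_le_abs_integral_norm (f := fun x => w x • g x)
    _ = _ := sq_abs _
    _ ≤ _ := hCS

section Taylor

variable {E : Type*} [NormedAddCommGroup E] [NormedSpace ℝ E] [CompleteSpace E]

theorem taylor_integral_remainder_one {a b : ℝ} {f f' f'' : ℝ → E}
    (hf : ∀ x ∈ uIcc a b, HasDerivWithinAt f (f' x) (uIcc a b) x)
    (hf' : ∀ x ∈ uIcc a b, HasDerivWithinAt f' (f'' x) (uIcc a b) x)
    (hf'' : IntervalIntegrable f'' volume a b) :
    f b - f a - (b - a) • f' a = ∫ s in a..b, (b - s) • f'' s := by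
  have hf'_int : IntervalIntegrable f' volume a b :=
    ContinuousOn.intervalIntegrable fun x hx => (hf' x hx).continuousWithinAt
  have hftc : ∫ s in a..b, f' s = f b - f a :=
    integral_eq_sub_of_hasDeriv_right (fun x hx => (hf x hx).continuousWithinAt)
      (fun x hx => ((hf x (mem_Icc_of_Ioo hx)).hasDerivAt
        (Icc_mem_nhds hx.1 hx.2)).hasDerivWithinAt) hf'_int
  have hparts := integral_smul_deriv_eq_deriv_smul_of_hasDerivWithinAt (u := fun s => b - s)
    (fun x _ => ((hasDerivAt_id x).const_sub b).hasDerivWithinAt) hf'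
    intervalIntegrable_const hf''
  rw [hparts]
  simp only [sub_self, zero_smul, zero_sub, neg_smul, one_smul, intervalIntegral.integral_neg,
    hftc]
  abel

theorem norm_taylor_remainder_one_sq_le {a b : ℝ} {f f' f'' : ℝ → E}
    (hf : ∀ x ∈ uIcc a b, HasDerivWithinAt f (f' x) (uIcc a b) x)
    (hf' : ∀ x ∈ uIcc a b, HasDerivWithinAt f' (f'' x) (uIcc a b) x)
    (hf'' : ContinuousOn f'' (uIcc a b)) :
    ‖f b - f a - (b - a) • f' a‖ ^ 2 ≤ (b - a) ^ 3 / 3 * ∫ s in a..b, ‖f'' s‖ ^ 2 := by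
  have hweight : ∫ s in a..b, (b - s) ^ 2 = (b - a) ^ 3 / 3 := by
    rw [intervalIntegral.integral_comp_sub_left (fun x => x ^ 2) b]
    simp only [sub_self, integral_pow]
    ring
  rw [taylor_integral_remainder_one hf hf' hf''.intervalIntegrable, ← hweight]
  exact norm_intervalIntegral_smul_sq_le (by fun_prop) hf''

theorem norm_sub_average_sq_le {t h : ℝ} {f f' f'' : ℝ → E}
    (hf : ∀ x ∈ uIcc (t - h) (t + h), HasDerivWithinAt f (f' x) (uIcc (t - h) (t + h)) x)
    (hf' : ∀ x ∈ uIcc (t - h) (t + h), HasDerivWithinAt f' (f'' x) (uIcc (t - h) (t + h)) x)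
    (hf'' : ContinuousOn f'' (uIcc (t - h) (t + h))) :
    ‖f t - (2 : ℝ)⁻¹ • (f (t + h) + f (t - h))‖ ^ 2 ≤
      h ^ 3 / 6 * ∫ s in (t - h)..(t + h), ‖f'' s‖ ^ 2 := by
  have ht : t ∈ uIcc (t - h) (t + h) := by
    rw [mem_uIcc]
    rcases le_total 0 h with hh | hh
    · exact Or.inl ⟨by linarith, by linarith⟩
    · exact Or.inr ⟨by linarith, by linarith⟩
  have hsub₁ : uIcc t (t + h) ⊆ uIcc (t - h) (t + h) := uIcc_subset_uIcc ht right_mem_uIcc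
  have hsub₂ : uIcc t (t - h) ⊆ uIcc (t - h) (t + h) := uIcc_subset_uIcc ht left_mem_uIcc
  set R₁ := f (t + h) - f t - (t + h - t) • f' t
  set R₂ := f (t - h) - f t - (t - h - t) • f' t
  have hR₁ : ‖R₁‖ ^ 2 ≤ h ^ 3 / 3 * ∫ s in t..(t + h), ‖f'' s‖ ^ 2 := by
    have := norm_taylor_remainder_one_sq_le (fun x hx => (hf x (hsub₁ hx)).mono hsub₁)
      (fun x hx => (hf' x (hsub₁ hx)).mono hsub₁) (hf''.mono hsub₁)
    exact this.trans_eq (by rw [add_sub_cancel_left])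
  have hR₂ : ‖R₂‖ ^ 2 ≤ h ^ 3 / 3 * ∫ s in (t - h)..t, ‖f'' s‖ ^ 2 := by
    have := norm_taylor_remainder_one_sq_le (fun x hx => (hf x (hsub₂ hx)).mono hsub₂)
      (fun x hx => (hf' x (hsub₂ hx)).mono hsub₂) (hf''.mono hsub₂)
    refine this.trans_eq ?_
    rw [integral_symm (t - h) t]
    ring
  have hsplit : ∫ s in (t - h)..(t + h), ‖f'' s‖ ^ 2 =
      (∫ s in (t - h)..t, ‖f'' s‖ ^ 2) + ∫ s in t..(t + h), ‖f'' s‖ ^ 2 :=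
    (integral_add_adjacent_intervals
      ((hf''.mono (uIcc_subset_uIcc left_mem_uIcc ht)).norm.pow 2).intervalIntegrable
      ((hf''.mono hsub₁).norm.pow 2).intervalIntegrable).symm
  have hmid : f t - (2 : ℝ)⁻¹ • (f (t + h) + f (t - h)) = -(2 : ℝ)⁻¹ • (R₁ + R₂) := by
    module
  calc ‖f t - (2 : ℝ)⁻¹ • (f (t + h) + f (t - h))‖ ^ 2 = (2⁻¹ * ‖R₁ + R₂‖) ^ 2 := by
        rw [hmid, norm_smul, norm_neg, norm_inv, Real.norm_two]
    _ ≤ (2⁻¹ * (‖R₁‖ + ‖R₂‖)) ^ 2 := by gcongr; exact norm_add_le _ _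
    _ ≤ (‖R₁‖ ^ 2 + ‖R₂‖ ^ 2) / 2 := by nlinarith [sq_nonneg (‖R₁‖ - ‖R₂‖)]
    _ ≤ (h ^ 3 / 3 * (∫ s in t..(t + h), ‖f'' s‖ ^ 2) +
          h ^ 3 / 3 * ∫ s in (t - h)..t, ‖f'' s‖ ^ 2) / 2 := by gcongr
    _ = _ := by rw [hsplit]; ring

end Taylor

theorem sum_range_add_succ_le_two_mul {B : ℕ → ℝ} (hB : ∀ k, 0 ≤ B k) (M : ℕ) :
    ∑ k ∈ Finset.range M, (B k + B (k + 1)) ≤ 2 * ∑ k ∈ Finset.range (M + 1), B k := by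
  rw [Finset.sum_add_distrib]
  linarith [Finset.sum_range_succ B M, Finset.sum_range_succ' B M, hB 0, hB M]

theorem sum_integral_window_le {φ : ℝ → ℝ} (hφ : ∀ x, 0 ≤ φ x) {τ : ℝ} (hτ : 0 ≤ τ) (N : ℕ)
    (hint : IntervalIntegrable φ volume 0 (N * τ)) :
    ∑ n ∈ Finset.Icc 1 (N - 1), ∫ x in ((n : ℝ) - 1) * τ..((n : ℝ) + 1) * τ, φ x ≤
      2 * ∫ x in 0..N * τ, φ x := by
  set B : ℕ → ℝ := fun k => ∫ x in (k : ℝ) * τ..((k : ℝ) + 1) * τ, φ x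
  have hcell : ∀ k < N, IntervalIntegrable φ volume ((k : ℝ) * τ) (((k : ℝ) + 1) * τ) := by
    intro k hk
    have hkN : (k : ℝ) + 1 ≤ N := by exact_mod_cast hk
    refine hint.mono_set (uIcc_subset_uIcc ?_ ?_) <;>
      exact mem_uIcc_of_le (by positivity) (by nlinarith)
  have hB : ∀ k, 0 ≤ B k := fun k =>
    integral_nonneg (by nlinarith) fun x _ => hφ x
  have htotal : ∑ k ∈ Finset.range N, B k = ∫ x in 0..N * τ, φ x := by
    have := sum_integral_adjacent_intervals (a := fun k : ℕ => (k : ℝ) * τ) (μ := volume)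
      fun k hk => by simpa only [Nat.cast_add_one] using hcell k hk
    simpa only [B, Nat.cast_add_one, Nat.cast_zero, zero_mul] using this
  rcases N with _ | M
  · simp
  have hwindow : ∀ k ∈ Finset.range M,
      ∫ x in (((1 + k : ℕ) : ℝ) - 1) * τ..(((1 + k : ℕ) : ℝ) + 1) * τ, φ x = B k + B (k + 1) := by
    intro k hk
    have hkM := Finset.mem_range.mp hk
    have hlo : (((1 + k : ℕ) : ℝ) - 1) * τ = k * τ := by push_cast; ring
    have hhi : (((1 + k : ℕ) : ℝ) + 1) * τ = ((k : ℝ) + 1 + 1) * τ := by push_cast; ring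
    have hnext := hcell (k + 1) (by omega)
    rw [hlo, hhi]
    simp only [B, Nat.cast_add_one] at hnext ⊢
    exact (integral_add_adjacent_intervals (hcell k (by omega)) hnext).symm
  rw [Nat.add_sub_cancel, ← Finset.Ico_add_one_right_eq_Icc, Finset.sum_Ico_eq_sum_range,
    Nat.add_sub_cancel, Finset.sum_congr rfl hwindow, ← htotal]
  exact sum_range_add_succ_le_two_mul hB M

/-- Summed consistency estimate for the two-level average of the Crank–Nicolson
Leap-Frog scheme (Lemma 4.2, last two inequalities):
`τ ∑_{n=1}^{N-1} ‖f(t_n) - (f(t_{n+1}) + f(t_{n-1}))/2‖² ≤ (τ⁴/3) ∫_0^T ‖f''(s)‖² ds`,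
where `τ = T/N` and `t_n = n τ`. -/
theorem two_level_average_summed_consistency
    {E : Type*} [NormedAddCommGroup E] [NormedSpace ℝ E] [CompleteSpace E]
    (T : ℝ) (hT : 0 < T) (N : ℕ) (hN : 2 ≤ N) (τ : ℝ) (hτ : τ = T / N)
    (f f1 f2 : ℝ → E)
    (hf : ∀ s ∈ Set.Icc (0 : ℝ) T, HasDerivWithinAt f (f1 s) (Set.Icc (0 : ℝ) T) s)
    (hf1 : ∀ s ∈ Set.Icc (0 : ℝ) T, HasDerivWithinAt f1 (f2 s) (Set.Icc (0 : ℝ) T) s)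
    (hf2 : ContinuousOn f2 (Set.Icc (0 : ℝ) T)) :
    τ * ∑ n ∈ Finset.Icc 1 (N - 1),
        ‖f ((n : ℝ) * τ) -
          (2 : ℝ)⁻¹ • (f (((n : ℝ) + 1) * τ) + f (((n : ℝ) - 1) * τ))‖ ^ 2 ≤
      τ ^ 4 / 3 * ∫ s in (0 : ℝ)..T, ‖f2 s‖ ^ 2 := by
  have hτ0 : 0 ≤ τ := by rw [hτ]; positivity
  have hNτ : (N : ℝ) * τ = T := by rw [hτ]; field_simp
  have hint : IntervalIntegrable (fun s => ‖f2 s‖ ^ 2) volume 0 (N * τ) := by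
    rw [hNτ]
    exact ((hf2.norm.pow 2).mono (uIcc_of_le hT.le).subset).intervalIntegrable
  calc _ ≤ τ * ∑ n ∈ Finset.Icc 1 (N - 1),
        τ ^ 3 / 6 * ∫ s in ((n : ℝ) - 1) * τ..((n : ℝ) + 1) * τ, ‖f2 s‖ ^ 2 := by
        gcongr with n hn
        obtain ⟨hn1, hnN⟩ := Finset.mem_Icc.mp hn
        have hn1' : (1 : ℝ) ≤ n := by exact_mod_cast hn1
        have hnN' : (n : ℝ) + 1 ≤ N := by exact_mod_cast (by omega : n + 1 ≤ N)
        rw [show ((n : ℝ) + 1) * τ = n * τ + τ by ring,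
          show ((n : ℝ) - 1) * τ = n * τ - τ by ring]
        have hsub : uIcc ((n : ℝ) * τ - τ) (n * τ + τ) ⊆ Icc 0 T := by
          rw [uIcc_of_le (by linarith)]
          exact Icc_subset_Icc (by nlinarith) (by nlinarith)
        exact norm_sub_average_sq_le (fun x hx => (hf x (hsub hx)).mono hsub)
          (fun x hx => (hf1 x (hsub hx)).mono hsub) (hf2.mono hsub)
    _ ≤ τ * (τ ^ 3 / 6 * (2 * ∫ s in 0..N * τ, ‖f2 s‖ ^ 2)) := by
        rw [← Finset.mul_sum]
        gcongr
        exact sum_integral_window_le (fun _ => by positivity) hτ0 N hint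
    _ = _ := by rw [hNτ]; ring
end

section
/- Let u : ℝ² → ℝ² be a continuously differentiable vector field with compact support and let v, w : ℝ² → ℝ² be continuously differentiable vector fields. Then B(u, v, w) = −B(u, w, v). -/
open MeasureTheory

/-- The convective term `((u·∇)v)·w` at a point `x`, where
`((u·∇)v)_i = ∑_j u_j ∂_j v_i`. -/
noncomputable def convTerm (u v w : (Fin 2 → ℝ) → (Fin 2 → ℝ)) (x : Fin 2 → ℝ) : ℝ :=
  ∑ i, fderiv ℝ v x (u x) i * w x i

/-- The divergence `div u = ∑_j ∂_j u_j` at a point `x`. -/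
noncomputable def divg (u : (Fin 2 → ℝ) → (Fin 2 → ℝ)) (x : Fin 2 → ℝ) : ℝ :=
  ∑ j, fderiv ℝ u x (Pi.single j 1) j

/-- The trilinear form
`B(u, v, w) = ∫ ((u·∇)v)·w dx + (1/2) ∫ (div u)(v·w) dx`. -/
noncomputable def Bform (u v w : (Fin 2 → ℝ) → (Fin 2 → ℝ)) : ℝ :=
  (∫ x, convTerm u v w x) + (1 / 2) * ∫ x, divg u x * (∑ i, v x i * w x i)

/-!
Since `(u·∇)v·w + (u·∇)w·v = u·∇(v·w)`, the sum `B(u, v, w) + B(u, w, v)` is the integral of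
`u·∇(v·w) + (div u)(v·w) = div((v·w) u)`. The field `(v·w) u` is `C¹` with compact support,
so the integral of its divergence vanishes: each `∂_j` integrates to zero (integration by parts
against the constant `1`).
-/

open Measure

section FiniteDimensional

variable {E G : Type*} [NormedAddCommGroup E] [NormedSpace ℝ E] [NormedAddCommGroup G]
  [NormedSpace ℝ G]

theorem ContDiff.dotProduct {ι : Type*} [Fintype ι] {v w : E → ι → ℝ} {n : WithTop ℕ∞}
    (hv : ContDiff ℝ n v) (hw : ContDiff ℝ n w) : ContDiff ℝ n fun x => v x ⬝ᵥ w x :=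
  ContDiff.sum fun i _ => (contDiff_pi.1 hv i).mul (contDiff_pi.1 hw i)

theorem fderiv_dotProduct {ι : Type*} [Fintype ι] {v w : E → ι → ℝ} {x : E}
    (hv : DifferentiableAt ℝ v x) (hw : DifferentiableAt ℝ w x) (h : E) :
    fderiv ℝ (fun y => v y ⬝ᵥ w y) x h = fderiv ℝ v x h ⬝ᵥ w x + v x ⬝ᵥ fderiv ℝ w x h := by
  have hvi (i : ι) : DifferentiableAt ℝ (fun y => v y i) x := differentiableAt_pi.1 hv i
  have hwi (i : ι) : DifferentiableAt ℝ (fun y => w y i) x := differentiableAt_pi.1 hw i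
  simp only [dotProduct]
  rw [fderiv_fun_sum (A := fun i y => v y i * w y i) fun i _ => (hvi i).mul (hwi i)]
  simp [fderiv_fun_mul (hvi _) (hwi _), fderiv_apply hv, fderiv_apply hw,
    Finset.sum_add_distrib, mul_comm, add_comm]

variable [MeasurableSpace E] [BorelSpace E] {μ : Measure E} {f : E → G}

theorem integrable_fderiv_apply [IsFiniteMeasureOnCompacts μ] (hf : ContDiff ℝ 1 f)
    (hfs : HasCompactSupport f) (v : E) : Integrable (fun x => fderiv ℝ f x v) μ :=
  ((hf.continuous_fderiv one_ne_zero).clm_apply continuous_const).integrable_of_hasCompactSupport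
    (hfs.fderiv_apply (𝕜 := ℝ) v)

theorem integral_fderiv_apply_eq_zero [FiniteDimensional ℝ E] [IsAddHaarMeasure μ]
    (hf : ContDiff ℝ 1 f) (hfs : HasCompactSupport f) (v : E) : ∫ x, fderiv ℝ f x v ∂μ = 0 := by
  have := integral_smul_fderiv_eq_neg_fderiv_smul_of_integrable (μ := μ) (v := v)
    (𝕜 := ℝ) (f := fun _ => 1) (g := f) (by simp)
    (by simpa using integrable_fderiv_apply hf hfs v)
    (by simpa using hf.continuous.integrable_of_hasCompactSupport hfs)
    (fun _ _ => differentiableAt_const _) (fun x _ => hf.differentiable one_ne_zero x)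
  simpa using this

end FiniteDimensional

section Plane

variable {u v w : (Fin 2 → ℝ) → (Fin 2 → ℝ)}

theorem convTerm_add_convTerm_swap {x : Fin 2 → ℝ} (hv : DifferentiableAt ℝ v x)
    (hw : DifferentiableAt ℝ w x) :
    convTerm u v w x + convTerm u w v x = fderiv ℝ (fun y => v y ⬝ᵥ w y) x (u x) := by
  rw [fderiv_dotProduct hv hw, dotProduct_comm (v x)]
  rfl

theorem divg_smul {φ : (Fin 2 → ℝ) → ℝ} {x : Fin 2 → ℝ} (hφ : DifferentiableAt ℝ φ x)
    (hu : DifferentiableAt ℝ u x) :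
    divg (fun y => φ y • u y) x = fderiv ℝ φ x (u x) + φ x * divg u x := by
  classical
  have hφu : fderiv ℝ φ x (u x) = ∑ j, u x j * fderiv ℝ φ x (Pi.single j 1) := by
    conv_lhs => rw [pi_eq_sum_univ' (u x)]
    simp only [_root_.map_sum, map_smul, smul_eq_mul]
  rw [divg, fderiv_fun_smul hφ hu, divg, Finset.mul_sum, hφu]
  simp [Finset.sum_add_distrib, mul_comm, add_comm]

theorem integral_divg_eq_zero (hu : ContDiff ℝ 1 u) (hus : HasCompactSupport u) :
    ∫ x, divg u x = 0 := by
  have huj (j : Fin 2) : ContDiff ℝ 1 fun x => u x j := contDiff_pi.1 hu j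
  have husj (j : Fin 2) : HasCompactSupport fun x => u x j :=
    hus.comp_left (g := fun p : Fin 2 → ℝ => p j) rfl
  have hdivg : divg u = fun x => ∑ j, fderiv ℝ (fun y => u y j) x (Pi.single j 1) := by
    ext x
    simp [divg, fderiv_apply (hu.differentiable one_ne_zero x)]
  rw [hdivg, integral_finsetSum _ fun j _ => integrable_fderiv_apply (huj j) (husj j) _]
  exact Finset.sum_eq_zero fun j _ => integral_fderiv_apply_eq_zero (huj j) (husj j) _

theorem integrable_convTerm (hu : Continuous u) (hus : HasCompactSupport u)
    (hv : ContDiff ℝ 1 v) (hw : Continuous w) : Integrable (convTerm u v w) := by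
  refine Continuous.integrable_of_hasCompactSupport ?_ (hus.mono fun x hx hux => hx ?_)
  · exact continuous_finsetSum _ fun i _ => (continuous_apply i |>.comp <|
      (hv.continuous_fderiv one_ne_zero).clm_apply hu).mul (continuous_apply i |>.comp hw)
  · simp [convTerm, hux]

theorem integrable_divg_mul (hu : ContDiff ℝ 1 u) (hus : HasCompactSupport u)
    {g : (Fin 2 → ℝ) → ℝ} (hg : Continuous g) : Integrable fun x => divg u x * g x := by
  have hdivg : HasCompactSupport (divg u) :=
    (hus.fderiv (𝕜 := ℝ)).mono fun x hx hux => hx (by simp [divg, hux])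
  refine Continuous.integrable_of_hasCompactSupport ?_ hdivg.mul_right
  exact (continuous_finsetSum _ fun j _ => continuous_apply j |>.comp <|
    (hu.continuous_fderiv one_ne_zero).clm_apply continuous_const).mul hg

end Plane

/-- Antisymmetry property (2.14) for the velocity transport term:
`B(u, v, w) = -B(u, w, v)`. -/
theorem Bform_antisymm
    (u v w : (Fin 2 → ℝ) → (Fin 2 → ℝ))
    (hu : ContDiff ℝ 1 u) (hus : HasCompactSupport u)
    (hv : ContDiff ℝ 1 v) (hw : ContDiff ℝ 1 w) :
    Bform u v w = -Bform u w v := by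
  have hvw : ContDiff ℝ 1 fun x => v x ⬝ᵥ w x := hv.dotProduct hw
  have hdiv (x) : convTerm u v w x + convTerm u w v x + divg u x * (v x ⬝ᵥ w x) =
      divg (fun y => (v y ⬝ᵥ w y) • u y) x := by
    have hd {f : (Fin 2 → ℝ) → (Fin 2 → ℝ)} (hf : ContDiff ℝ 1 f) :=
      hf.differentiable one_ne_zero x
    rw [divg_smul (hvw.differentiable one_ne_zero x) (hd hu),
      convTerm_add_convTerm_swap (hd hv) (hd hw)]
    ring
  have hsum : ∫ x, convTerm u v w x + convTerm u w v x + divg u x * (v x ⬝ᵥ w x) = 0 := by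
    simp_rw [hdiv]
    exact integral_divg_eq_zero (hvw.smul hu) (hus.smul_left (f := fun y => v y ⬝ᵥ w y))
  have hA := integrable_convTerm hu.continuous hus hv hw.continuous
  have hB := integrable_convTerm hu.continuous hus hw hv.continuous
  have hC := integrable_divg_mul hu hus hvw.continuous
  rw [integral_add (hA.fun_add hB) hC, integral_add hA hB] at hsum
  show (∫ x, convTerm u v w x) + 1 / 2 * ∫ x, divg u x * (v x ⬝ᵥ w x) =
    -((∫ x, convTerm u w v x) + 1 / 2 * ∫ x, divg u x * (w x ⬝ᵥ v x))
  simp_rw [dotProduct_comm (w _)]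
  linarith
end

section
/- Let Ω be a bounded open subset of ℝ². There exists a constant C > 0, depending only on Ω, such that for all continuously differentiable vector fields u, v, w : ℝ² → ℝ² with compact support contained in Ω one has |B(u, v, w)| ≤ C·‖∇u‖_{L²}·‖∇v‖_{L²}·‖∇w‖_{L²}. -/
open MeasureTheory

/-- The `L²` norm of the gradient:
`‖∇u‖_{L²} = (∫ ∑_i ∑_j (∂_j u_i)² dx)^{1/2}`. -/
noncomputable def gradL2 (u : (Fin 2 → ℝ) → (Fin 2 → ℝ)) : ℝ :=
  Real.sqrt (∫ x, ∑ i, ∑ j, (fderiv ℝ u x (Pi.single j 1) i) ^ 2)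

/-! Both terms of `B(u, v, w)` are bounded pointwise by a multiple of `|∇a| |b| |c|`, where
`{a, b, c} = {u, v, w}`, so Hölder's inequality with exponents `(2, 4, 4)` bounds them by
`‖∇a‖_{L²} ‖b‖_{L⁴} ‖c‖_{L⁴}`. In dimension two the Gagliardo–Nirenberg–Sobolev inequality gives
`‖b‖_{L⁴} ≤ C ‖∇b‖_{L^{4/3}}`, and since `b` is supported in the bounded set `Ω`, Hölder again gives
`‖∇b‖_{L^{4/3}} ≤ |Ω|^{1/4} ‖∇b‖_{L²}`. -/

open ENNReal NNReal Module

section FiniteDimensional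

variable {ι κ : Type*} [Fintype ι] [Fintype κ]

theorem abs_sum_mul_le_card_mul (a b : ι → ℝ) :
    |∑ i, a i * b i| ≤ Fintype.card ι * (‖a‖ * ‖b‖) := by
  calc |∑ i, a i * b i| ≤ ∑ i, |a i| * |b i| := by
        simpa only [abs_mul] using Finset.abs_sum_le_sum_abs (fun i => a i * b i) Finset.univ
    _ ≤ ∑ _i : ι, ‖a‖ * ‖b‖ := by
        gcongr with i; exacts [norm_le_pi_norm a i, norm_le_pi_norm b i]
    _ = _ := by simp

variable [DecidableEq ι]

theorem abs_sum_apply_single_le_card_mul (L : (ι → ℝ) →L[ℝ] (ι → ℝ)) :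
    |∑ j, L (Pi.single j 1) j| ≤ Fintype.card ι * ‖L‖ := by
  calc |∑ j, L (Pi.single j 1) j| ≤ ∑ j, |L (Pi.single j 1) j| :=
        Finset.abs_sum_le_sum_abs _ _
    _ ≤ ∑ _j : ι, ‖L‖ := by
        gcongr with j
        simpa [Pi.norm_single] using
          (norm_le_pi_norm (L (Pi.single j 1)) j).trans (L.le_opNorm (Pi.single j 1))
    _ = _ := by simp

theorem opNorm_le_card_mul_sqrt_sum_sq (L : (ι → ℝ) →L[ℝ] (κ → ℝ)) :
    ‖L‖ ≤ Fintype.card ι * √(∑ i, ∑ j, L (Pi.single j 1) i ^ 2) := by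
  set S := ∑ i, ∑ j, L (Pi.single j 1) i ^ 2
  have hentry (i : κ) (j : ι) : ‖L (Pi.single j 1) i‖ ≤ √S := by
    rw [Real.norm_eq_abs, ← Real.sqrt_sq_eq_abs]
    gcongr
    exact (Finset.single_le_sum (fun j _ => sq_nonneg (L (Pi.single j 1) i))
      (Finset.mem_univ j)).trans (Finset.single_le_sum (f := fun i => ∑ j, L (Pi.single j 1) i ^ 2)
        (fun i _ => by positivity) (Finset.mem_univ i))
  refine L.opNorm_le_bound (by positivity) fun y => ?_
  calc ‖L y‖ = ‖∑ j, y j • L (Pi.single j 1)‖ := by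
        conv_lhs => rw [← Finset.univ_sum_single y]
        simp only [map_sum, ← map_smul, ← Pi.single_smul', smul_eq_mul, mul_one]
    _ ≤ ∑ j, ‖y j‖ * ‖L (Pi.single j 1)‖ := norm_sum_le_of_le _ fun j _ => (norm_smul _ _).le
    _ ≤ ∑ _j : ι, ‖y‖ * √S := by
        gcongr with j
        · exact norm_le_pi_norm y j
        · exact (pi_norm_le_iff_of_nonneg (by positivity)).2 fun i => hentry i j
    _ = _ := by rw [Finset.sum_const, Finset.card_univ, nsmul_eq_mul]; ring

end FiniteDimensional

theorem enorm_le_of_norm_le {E F G H : Type*} [NormedAddCommGroup E] [NormedAddCommGroup F]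
    [NormedAddCommGroup G] [NormedAddCommGroup H] {a : E} {b : F} {c : G} {d : H} {k : ℝ≥0}
    (h : ‖a‖ ≤ k * (‖b‖ * ‖c‖ * ‖d‖)) : ‖a‖ₑ ≤ k * (‖b‖ₑ * ‖c‖ₑ * ‖d‖ₑ) := by
  simp only [enorm, ← ENNReal.coe_mul, ENNReal.coe_le_coe, ← NNReal.coe_le_coe]
  simpa using h

theorem enorm_convTerm_le (u v w : (Fin 2 → ℝ) → (Fin 2 → ℝ)) (x : Fin 2 → ℝ) :
    ‖convTerm u v w x‖ₑ ≤ 2 * (‖fderiv ℝ v x‖ₑ * ‖u x‖ₑ * ‖w x‖ₑ) := by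
  refine enorm_le_of_norm_le ?_
  calc ‖convTerm u v w x‖ ≤ 2 * (‖fderiv ℝ v x (u x)‖ * ‖w x‖) := by
        simpa [convTerm] using abs_sum_mul_le_card_mul (fderiv ℝ v x (u x)) (w x)
    _ ≤ _ := by grw [(fderiv ℝ v x).le_opNorm (u x)]; norm_num

theorem enorm_divg_mul_le (u v w : (Fin 2 → ℝ) → (Fin 2 → ℝ)) (x : Fin 2 → ℝ) :
    ‖divg u x * ∑ i, v x i * w x i‖ₑ ≤ 4 * (‖fderiv ℝ u x‖ₑ * ‖v x‖ₑ * ‖w x‖ₑ) := by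
  refine enorm_le_of_norm_le ?_
  calc ‖divg u x * ∑ i, v x i * w x i‖
      ≤ (2 * ‖fderiv ℝ u x‖) * (2 * (‖v x‖ * ‖w x‖)) := by
        rw [norm_mul]
        gcongr
        · simpa [divg] using abs_sum_apply_single_le_card_mul (fderiv ℝ u x)
        · simpa using abs_sum_mul_le_card_mul (v x) (w x)
    _ = _ := by push_cast; ring

theorem eLpNorm_fderiv_le_two_mul_gradL2 {u : (Fin 2 → ℝ) → (Fin 2 → ℝ)} (hu : ContDiff ℝ 1 u)
    (h2u : HasCompactSupport u) :
    eLpNorm (fderiv ℝ u) 2 volume ≤ ENNReal.ofReal (2 * gradL2 u) := by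
  set S := fun x => ∑ i, ∑ j, (fderiv ℝ u x (Pi.single j 1) i) ^ 2
  have hS : HasCompactSupport S := (h2u.fderiv ℝ).comp_left
    (g := fun L : (Fin 2 → ℝ) →L[ℝ] (Fin 2 → ℝ) => ∑ i, ∑ j, (L (Pi.single j 1) i) ^ 2) (by simp)
  have hS' : MemLp (fun x => 2 * √(S x)) 2 volume :=
    Continuous.memLp_of_hasCompactSupport (by fun_prop)
      (hS.comp_left (g := fun t => 2 * √t) (by simp))
  calc eLpNorm (fderiv ℝ u) 2 volume ≤ eLpNorm (fun x => 2 * √(S x)) 2 volume :=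
        eLpNorm_mono_real fun x => by simpa [S] using opNorm_le_card_mul_sqrt_sum_sq (fderiv ℝ u x)
    _ = ENNReal.ofReal (2 * gradL2 u) := by
        rw [hS'.eLpNorm_eq_integral_rpow_norm (by simp) (by simp)]
        congr 1
        have hsq (x : Fin 2 → ℝ) : ‖2 * √(S x)‖ ^ (2 : ℝ≥0∞).toReal = 4 * S x := by
          norm_num [mul_pow, Real.sq_sqrt (show 0 ≤ S x by positivity)]
        simp_rw [hsq, integral_const_mul]
        rw [ENNReal.toReal_ofNat, ← one_div, ← Real.sqrt_eq_rpow, Real.sqrt_mul zero_le_four,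
          show (4 : ℝ) = 2 ^ 2 by norm_num, Real.sqrt_sq zero_le_two, gradL2]

theorem lintegral_enorm_mul_enorm_mul_enorm_le {α E F G : Type*} [MeasurableSpace α]
    {μ : Measure α} [NormedAddCommGroup E] [NormedAddCommGroup F] [NormedAddCommGroup G]
    {f : α → E} {g : α → F} {h : α → G} (hf : AEStronglyMeasurable f μ)
    (hg : AEStronglyMeasurable g μ) (hh : AEStronglyMeasurable h μ) :
    ∫⁻ x, ‖f x‖ₑ * ‖g x‖ₑ * ‖h x‖ₑ ∂μ ≤ eLpNorm f 2 μ * eLpNorm g 4 μ * eLpNorm h 4 μ := by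
  have : HolderTriple (2 : ℝ≥0∞) 2 1 := ⟨by norm_num [ENNReal.inv_two_add_inv_two]⟩
  have : HolderTriple (4 : ℝ≥0∞) 4 2 := ⟨by
    rw [← ENNReal.toReal_eq_toReal_iff' (by simp) (by simp), ENNReal.toReal_add (by simp) (by simp)]
    norm_num⟩
  calc ∫⁻ x, ‖f x‖ₑ * ‖g x‖ₑ * ‖h x‖ₑ ∂μ
      = eLpNorm (fun x => ‖f x‖ * (‖g x‖ * ‖h x‖)) 1 μ := by
        simp [eLpNorm_one_eq_lintegral_enorm, enorm_mul, mul_assoc]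
    _ ≤ 1 * eLpNorm f 2 μ * eLpNorm (fun x => ‖g x‖ * ‖h x‖) 2 μ :=
        eLpNorm_le_eLpNorm_mul_eLpNorm'_of_norm hf (hg.norm.mul hh.norm) (fun a t => ‖a‖ * t) 1
          (.of_forall fun x => by simp)
    _ ≤ eLpNorm f 2 μ * (1 * eLpNorm g 4 μ * eLpNorm h 4 μ) := by
        rw [one_mul]
        gcongr
        exact eLpNorm_le_eLpNorm_mul_eLpNorm'_of_norm hg hh (fun a b => ‖a‖ * ‖b‖) 1
          (.of_forall fun x => by simp)
    _ = _ := by ring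

theorem eLpNorm_le_measure_rpow_mul_eLpNorm_fderiv {E F : Type*} [NormedAddCommGroup E]
    [NormedSpace ℝ E] [MeasurableSpace E] [BorelSpace E] [FiniteDimensional ℝ E]
    (μ : Measure E) [μ.IsAddHaarMeasure] [NormedAddCommGroup F] [NormedSpace ℝ F]
    [FiniteDimensional ℝ F] {u : E → F} {s : Set E} (hu : ContDiff ℝ 1 u)
    (h2u : HasCompactSupport u) (hus : tsupport u ⊆ s) {p p' r : ℝ≥0} (hp : 1 ≤ p)
    (hn : 0 < finrank ℝ E) (hp' : (p' : ℝ)⁻¹ = p⁻¹ - (finrank ℝ E : ℝ)⁻¹) (hpr : p ≤ r) :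
    eLpNorm u p' μ ≤ SNormLESNormFDerivOfEqConst F μ p * μ s ^ ((p : ℝ)⁻¹ - (r : ℝ)⁻¹) *
      eLpNorm (fderiv ℝ u) r μ := by
  have hDu : (fderiv ℝ u).support ⊆ s := (support_fderiv_subset ℝ).trans hus
  have hHolder : eLpNorm (fderiv ℝ u) p μ ≤
      eLpNorm (fderiv ℝ u) r μ * μ s ^ ((p : ℝ)⁻¹ - (r : ℝ)⁻¹) := by
    rw [← eLpNorm_restrict_eq_of_support_subset (ε := E →L[ℝ] F) hDu,
      ← eLpNorm_restrict_eq_of_support_subset (ε := E →L[ℝ] F) hDu (p := r),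
      ← Measure.restrict_apply_univ]
    convert eLpNorm_le_eLpNorm_mul_rpow_measure_univ (p := p) (q := r) (by exact_mod_cast hpr)
      (hu.continuous_fderiv one_ne_zero).aestronglyMeasurable using 3
    simp
  calc eLpNorm u p' μ ≤ SNormLESNormFDerivOfEqConst F μ p * eLpNorm (fderiv ℝ u) p μ :=
        eLpNorm_le_eLpNorm_fderiv_of_eq μ hu h2u hp hn hp'
    _ ≤ _ := by grw [hHolder, mul_assoc, mul_comm (eLpNorm _ _ _)]

noncomputable def sobolevL4Const (Ω : Set (Fin 2 → ℝ)) : ℝ≥0 :=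
  SNormLESNormFDerivOfEqConst (Fin 2 → ℝ) (volume : Measure (Fin 2 → ℝ)) (4 / 3) *
    (volume Ω).toNNReal ^ (4⁻¹ : ℝ)

theorem eLpNorm_four_le_sobolevL4Const_mul {Ω : Set (Fin 2 → ℝ)}
    (hΩ : Bornology.IsBounded Ω) {u : (Fin 2 → ℝ) → (Fin 2 → ℝ)} (hu : ContDiff ℝ 1 u)
    (h2u : HasCompactSupport u) (huΩ : tsupport u ⊆ Ω) :
    eLpNorm u 4 volume ≤ sobolevL4Const Ω * ENNReal.ofReal (2 * gradL2 u) := by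
  have hGNS := eLpNorm_le_measure_rpow_mul_eLpNorm_fderiv volume hu h2u huΩ (p := 4 / 3)
    (p' := 4) (r := 2) (by rw [← NNReal.coe_le_coe]; norm_num) (by simp) (by simp; norm_num)
    (by rw [← NNReal.coe_le_coe]; norm_num)
  have hΩ4 : volume Ω ^ (((4 / 3 : ℝ≥0) : ℝ)⁻¹ - ((2 : ℝ≥0) : ℝ)⁻¹) =
      ((volume Ω).toNNReal ^ (4⁻¹ : ℝ) : ℝ≥0) := by
    rw [ENNReal.coe_rpow_of_nonneg _ (by norm_num), ENNReal.coe_toNNReal hΩ.measure_lt_top.ne]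
    norm_num
  rw [hΩ4] at hGNS
  calc eLpNorm u 4 volume ≤ sobolevL4Const Ω * eLpNorm (fderiv ℝ u) 2 volume := by
        simpa [sobolevL4Const] using hGNS
    _ ≤ _ := by grw [eLpNorm_fderiv_le_two_mul_gradL2 hu h2u]

theorem lintegral_enorm_fderiv_mul_enorm_mul_enorm_le {Ω : Set (Fin 2 → ℝ)}
    (hΩ : Bornology.IsBounded Ω) {f g h : (Fin 2 → ℝ) → (Fin 2 → ℝ)}
    (hf : ContDiff ℝ 1 f) (h2f : HasCompactSupport f)
    (hg : ContDiff ℝ 1 g) (h2g : HasCompactSupport g) (hgΩ : tsupport g ⊆ Ω)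
    (hh : ContDiff ℝ 1 h) (h2h : HasCompactSupport h) (hhΩ : tsupport h ⊆ Ω) :
    ∫⁻ x, ‖fderiv ℝ f x‖ₑ * ‖g x‖ₑ * ‖h x‖ₑ ≤
      ENNReal.ofReal (8 * sobolevL4Const Ω ^ 2 * (gradL2 f * gradL2 g * gradL2 h)) := by
  have hK := (sobolevL4Const Ω).coe_nonneg
  have hgf : 0 ≤ gradL2 f := Real.sqrt_nonneg _
  have hgg : 0 ≤ gradL2 g := Real.sqrt_nonneg _
  have hgh : 0 ≤ gradL2 h := Real.sqrt_nonneg _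
  calc ∫⁻ x, ‖fderiv ℝ f x‖ₑ * ‖g x‖ₑ * ‖h x‖ₑ
      ≤ eLpNorm (fderiv ℝ f) 2 volume * eLpNorm g 4 volume * eLpNorm h 4 volume :=
        lintegral_enorm_mul_enorm_mul_enorm_le
          (hf.continuous_fderiv one_ne_zero).aestronglyMeasurable
          hg.continuous.aestronglyMeasurable hh.continuous.aestronglyMeasurable
    _ ≤ ENNReal.ofReal (2 * gradL2 f) * (sobolevL4Const Ω * ENNReal.ofReal (2 * gradL2 g)) *
          (sobolevL4Const Ω * ENNReal.ofReal (2 * gradL2 h)) := by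
        grw [eLpNorm_fderiv_le_two_mul_gradL2 hf h2f,
          eLpNorm_four_le_sobolevL4Const_mul hΩ hg h2g hgΩ,
          eLpNorm_four_le_sobolevL4Const_mul hΩ hh h2h hhΩ]
    _ = _ := by
        simp only [← ENNReal.ofReal_coe_nnreal]
        rw [← ENNReal.ofReal_mul hK, ← ENNReal.ofReal_mul hK, ← ENNReal.ofReal_mul (by positivity),
          ← ENNReal.ofReal_mul (by positivity)]
        ring_nf

theorem norm_integral_le_of_lintegral_enorm_le {α G : Type*} [MeasurableSpace α] {μ : Measure α}
    [NormedAddCommGroup G] [NormedSpace ℝ G] {f : α → G} {b : ℝ} (hb : 0 ≤ b)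
    (h : ∫⁻ x, ‖f x‖ₑ ∂μ ≤ ENNReal.ofReal b) : ‖∫ x, f x ∂μ‖ ≤ b :=
  (norm_integral_le_lintegral_norm f).trans (ENNReal.toReal_le_of_le_ofReal hb (by simpa using h))

section Integrals

variable {Ω : Set (Fin 2 → ℝ)} (hΩ : Bornology.IsBounded Ω) {u v w : (Fin 2 → ℝ) → (Fin 2 → ℝ)}
  (hu : ContDiff ℝ 1 u) (h2u : HasCompactSupport u)
  (hv : ContDiff ℝ 1 v) (h2v : HasCompactSupport v)
  (hw : ContDiff ℝ 1 w) (h2w : HasCompactSupport w) (hwΩ : tsupport w ⊆ Ω)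
include hΩ hu h2u hv h2v hw h2w hwΩ

theorem abs_integral_convTerm_le (huΩ : tsupport u ⊆ Ω) :
    |∫ x, convTerm u v w x| ≤
      16 * sobolevL4Const Ω ^ 2 * (gradL2 u * gradL2 v * gradL2 w) := by
  rw [← Real.norm_eq_abs]
  refine norm_integral_le_of_lintegral_enorm_le (by unfold gradL2; positivity) ?_
  calc ∫⁻ x, ‖convTerm u v w x‖ₑ
      ≤ ∫⁻ x, 2 * (‖fderiv ℝ v x‖ₑ * ‖u x‖ₑ * ‖w x‖ₑ) := lintegral_mono (enorm_convTerm_le u v w)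
    _ ≤ 2 * ENNReal.ofReal (8 * sobolevL4Const Ω ^ 2 * (gradL2 v * gradL2 u * gradL2 w)) := by
        rw [lintegral_const_mul' _ _ (by simp)]
        grw [lintegral_enorm_fderiv_mul_enorm_mul_enorm_le hΩ hv h2v hu h2u huΩ hw h2w hwΩ]
    _ = _ := by rw [← ENNReal.ofReal_ofNat 2, ← ENNReal.ofReal_mul (by norm_num)]; ring_nf

theorem abs_integral_divg_mul_le (hvΩ : tsupport v ⊆ Ω) :
    |∫ x, divg u x * ∑ i, v x i * w x i| ≤
      32 * sobolevL4Const Ω ^ 2 * (gradL2 u * gradL2 v * gradL2 w) := by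
  rw [← Real.norm_eq_abs]
  refine norm_integral_le_of_lintegral_enorm_le (by unfold gradL2; positivity) ?_
  calc ∫⁻ x, ‖divg u x * ∑ i, v x i * w x i‖ₑ
      ≤ ∫⁻ x, 4 * (‖fderiv ℝ u x‖ₑ * ‖v x‖ₑ * ‖w x‖ₑ) := lintegral_mono (enorm_divg_mul_le u v w)
    _ ≤ 4 * ENNReal.ofReal (8 * sobolevL4Const Ω ^ 2 * (gradL2 u * gradL2 v * gradL2 w)) := by
        rw [lintegral_const_mul' _ _ (by simp)]
        grw [lintegral_enorm_fderiv_mul_enorm_mul_enorm_le hΩ hu h2u hv h2v hvΩ hw h2w hwΩ]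
    _ = _ := by rw [← ENNReal.ofReal_ofNat 4, ← ENNReal.ofReal_mul (by norm_num)]; ring_nf

end Integrals

theorem Bform_continuity_bound_general
    (Ω : Set (Fin 2 → ℝ)) (hΩb : Bornology.IsBounded Ω) :
    ∃ C > 0, ∀ u v w : (Fin 2 → ℝ) → (Fin 2 → ℝ),
      ContDiff ℝ 1 u → HasCompactSupport u → tsupport u ⊆ Ω →
      ContDiff ℝ 1 v → HasCompactSupport v → tsupport v ⊆ Ω →
      ContDiff ℝ 1 w → HasCompactSupport w → tsupport w ⊆ Ω →
      |Bform u v w| ≤ C * gradL2 u * gradL2 v * gradL2 w := by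
  set K : ℝ := (sobolevL4Const Ω : ℝ)
  refine ⟨32 * K ^ 2 + 1, by positivity, fun u v w hu h2u huΩ hv h2v hvΩ hw h2w hwΩ => ?_⟩
  have hP : 0 ≤ gradL2 u * gradL2 v * gradL2 w := by unfold gradL2; positivity
  have hconv := abs_integral_convTerm_le hΩb hu h2u hv h2v hw h2w hwΩ huΩ
  have hdiv := abs_integral_divg_mul_le hΩb hu h2u hv h2v hw h2w hwΩ hvΩ
  calc |Bform u v w|
      ≤ |∫ x, convTerm u v w x| + |1 / 2 * ∫ x, divg u x * ∑ i, v x i * w x i| := abs_add_le _ _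
    _ = |∫ x, convTerm u v w x| + 1 / 2 * |∫ x, divg u x * ∑ i, v x i * w x i| := by
        rw [abs_mul, abs_of_pos (by norm_num : (0 : ℝ) < 1 / 2)]
    _ ≤ (32 * K ^ 2 + 1) * (gradL2 u * gradL2 v * gradL2 w) := by nlinarith
    _ = _ := by ring

/-- Continuity bound (2.15) for the velocity transport form:
`|B(u, v, w)| ≤ C ‖∇u‖_{L²} ‖∇v‖_{L²} ‖∇w‖_{L²}` with `C` depending only on `Ω`. -/
theorem Bform_continuity_bound
    (Ω : Set (Fin 2 → ℝ)) (hΩo : IsOpen Ω) (hΩb : Bornology.IsBounded Ω) :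
    ∃ C > 0, ∀ u v w : (Fin 2 → ℝ) → (Fin 2 → ℝ),
      ContDiff ℝ 1 u → HasCompactSupport u → tsupport u ⊆ Ω →
      ContDiff ℝ 1 v → HasCompactSupport v → tsupport v ⊆ Ω →
      ContDiff ℝ 1 w → HasCompactSupport w → tsupport w ⊆ Ω →
      |Bform u v w| ≤ C * gradL2 u * gradL2 v * gradL2 w :=
  Bform_continuity_bound_general Ω hΩb
end
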